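/- arXiv:2412.13776 — 6 statements merged into one kernel-verified Lean document; each statement's English description precedes it below -/
import Mathlib

section
/- The aggregation map σ is ℓ-Lipschitz on Ω with ℓ = K₃/(√n μ); that is, ‖σ(x) − σ(y)‖ ≤ (K₃/(√n μ))‖x − y‖ for all x, y ∈ Ω. -/
/-! The map `w ↦ ∑ⱼ gⱼ(xⱼ, w)` is `nμ`-strongly convex with minimizer `σ x`, hence exceeds its
minimum by at least `(nμ/2)‖w - σ x‖²`. Adding this growth for `x` at `σ y` to the growth for `y`
at `σ x` gives `nμ‖σ x - σ y‖² ≤ h(σ y) - h(σ x)` with `h = ∑ⱼ (gⱼ(xⱼ, ·) - gⱼ(yⱼ, ·))`. By the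
mean value theorem in the first argument, and since the operator norm is at most the Frobenius
norm, `‖∇h‖ ≤ K₃ ∑ⱼ ‖xⱼ - yⱼ‖`, and Cauchy–Schwarz bounds this sum by `√n ‖x - y‖`. -/

open scoped RealInnerProductSpace

noncomputable section

/-- Euclidean space `ℝ^m`. -/
abbrev E (m : ℕ) := EuclideanSpace ℝ (Fin m)

/-- Frobenius norm of a continuous linear map between Euclidean spaces
(the Frobenius norm of its matrix in the standard bases). -/
def frobNorm {m₁ m₂ : ℕ} (T : E m₁ →L[ℝ] E m₂) : ℝ :=
  Real.sqrt (∑ j : Fin m₂, ∑ i : Fin m₁, (T (EuclideanSpace.single i (1 : ℝ)) j) ^ 2)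

/-- `∇₁f(u, y)`: gradient of a bifunction in its first argument. -/
def grad₁ {m₁ m₂ : ℕ} (f : E m₁ → E m₂ → ℝ) (u : E m₁) (y : E m₂) : E m₁ :=
  gradient (fun u' => f u' y) u

/-- `∇₂f(u, y)`: gradient of a bifunction in its second argument. -/
def grad₂ {m₁ m₂ : ℕ} (f : E m₁ → E m₂ → ℝ) (u : E m₁) (y : E m₂) : E m₂ :=
  gradient (f u) y

/-- `∇₂₁f(u, y)`: Jacobian of `∇₂f` in the first argument
(a linear map `ℝ^{m₁} → ℝ^{m₂}`; the paper's `m₁×m₂` matrix in its row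
convention is the transpose of this map). -/
def jac₂₁ {m₁ m₂ : ℕ} (f : E m₁ → E m₂ → ℝ) (u : E m₁) (y : E m₂) : E m₁ →L[ℝ] E m₂ :=
  fderiv ℝ (fun u' => grad₂ f u' y) u

/-- `∇₂₂f(u, y)`: Hessian of `f` in the second argument. -/
def hess₂₂ {m₁ m₂ : ℕ} (f : E m₁ → E m₂ → ℝ) (u : E m₁) (y : E m₂) : E m₂ →L[ℝ] E m₂ :=
  fderiv ℝ (fun y' => grad₂ f u y') y

/-- `∇_{x_i}J_i(x_i, σ(x))`: the `i`-th component of the pseudo-gradient mapping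
`F(x) = col(∇_{x_i}J_i(x_i, σ(x)))_i`. -/
def pseudoGrad {n m₁ m₂ : ℕ} (J : Fin n → E m₁ → E m₂ → ℝ)
    (σ : (Fin n → E m₁) → E m₂) (x : Fin n → E m₁) (i : Fin n) : E m₁ :=
  gradient (fun u => J i u (σ (Function.update x i u))) (x i)

open Filter Topology Finset

lemma opNorm_le_frobNorm {m₁ m₂ : ℕ} (T : E m₁ →L[ℝ] E m₂) : ‖T‖ ≤ frobNorm T := by
  refine T.opNorm_le_bound (Real.sqrt_nonneg _) fun v => ?_
  have hTv : ∀ j, T v j = ∑ i, T (EuclideanSpace.single i 1) j * v i := by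
    intro j
    conv_lhs => rw [← (EuclideanSpace.basisFun (Fin m₁) ℝ).sum_repr v]
    simp [mul_comm]
  rw [EuclideanSpace.norm_eq, EuclideanSpace.norm_eq, frobNorm, ← Real.sqrt_mul (by positivity),
    sum_mul]
  refine Real.sqrt_le_sqrt (sum_le_sum fun j _ => ?_)
  simp only [Real.norm_eq_abs, sq_abs, hTv]
  exact sum_mul_sq_le_sq_mul_sq _ _ _

lemma Finset.sum_le_sqrt_card_mul_sqrt_sum_sq {ι : Type*} (s : Finset ι) (f : ι → ℝ) :
    ∑ i ∈ s, f i ≤ √(#s : ℝ) * √(∑ i ∈ s, f i ^ 2) := by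
  rw [← Real.sqrt_mul (Nat.cast_nonneg _)]
  exact (le_abs_self _).trans (Real.abs_le_sqrt sq_sum_le_card_mul_sum_sq)

section StrongConvexity

variable {F : Type*} [NormedAddCommGroup F] [NormedSpace ℝ F] {s : Set F} {m : ℝ}

lemma StrongConvexOn.sum {ι : Type*} {t : Finset ι} {f : ι → F → ℝ} (hs : Convex ℝ s)
    (hf : ∀ i ∈ t, StrongConvexOn s m (f i)) :
    StrongConvexOn s (#t * m) (fun x => ∑ i ∈ t, f i x) := by
  refine ⟨hs, fun x hx y hy a b ha hb hab => ?_⟩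
  calc ∑ i ∈ t, f i (a • x + b • y)
      ≤ ∑ i ∈ t, (a * f i x + b * f i y - a * b * (m / 2 * ‖x - y‖ ^ 2)) :=
        sum_le_sum fun i hi => (hf i hi).2 hx hy ha hb hab
    _ = a * ∑ i ∈ t, f i x + b * ∑ i ∈ t, f i y - a * b * (#t * m / 2 * ‖x - y‖ ^ 2) := by
        simp only [sum_sub_distrib, sum_add_distrib, ← mul_sum, sum_const, nsmul_eq_mul]
        ring

lemma StrongConvexOn.add_le_of_isMinOn {f : F → ℝ} {p q : F} (hf : StrongConvexOn s m f)
    (hp : IsMinOn f s p) (hps : p ∈ s) (hqs : q ∈ s) :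
    f p + m / 2 * ‖q - p‖ ^ 2 ≤ f q := by
  set c := m / 2 * ‖q - p‖ ^ 2
  have hseg : ∀ t ∈ Set.Ioo (0 : ℝ) 1, (1 - t) * c ≤ f q - f p := by
    rintro t ⟨ht0, ht1⟩
    have hmem := hf.1 hqs hps ht0.le (sub_nonneg.2 ht1.le) (add_sub_cancel t 1)
    have hconv := hf.2 hqs hps ht0.le (sub_nonneg.2 ht1.le) (add_sub_cancel t 1)
    simp only [smul_eq_mul] at hconv
    have hmin : f p ≤ f (t • q + (1 - t) • p) := hp hmem
    have : t * ((1 - t) * c) ≤ t * (f q - f p) := by simp only [c]; linarith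
    exact le_of_mul_le_mul_left this ht0
  have hlim : Tendsto (fun t : ℝ => (1 - t) * c) (𝓝[>] 0) (𝓝 c) := by
    have : Continuous fun t : ℝ => (1 - t) * c := by fun_prop
    simpa using (this.tendsto 0).mono_left nhdsWithin_le_nhds
  linarith [le_of_tendsto hlim (eventually_of_mem (Ioo_mem_nhdsGT one_pos) hseg)]

lemma StrongConvexOn.mul_norm_sub_le_of_isMinOn {f g : F → ℝ} {p q : F} {L : ℝ}
    (hf : StrongConvexOn s m f) (hg : StrongConvexOn s m g) (hp : IsMinOn f s p)
    (hq : IsMinOn g s q) (hps : p ∈ s) (hqs : q ∈ s) (hL : 0 ≤ L)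
    (hfg : (f q - g q) - (f p - g p) ≤ L * ‖p - q‖) :
    m * ‖p - q‖ ≤ L := by
  have hf_growth := hf.add_le_of_isMinOn hp hps hqs
  have hg_growth := hg.add_le_of_isMinOn hq hqs hps
  rw [norm_sub_rev] at hf_growth
  rcases (norm_nonneg (p - q)).eq_or_lt with hpq | hpq
  · simpa [← hpq] using hL
  · have : (m * ‖p - q‖) * ‖p - q‖ ≤ L * ‖p - q‖ := by linarith
    exact le_of_mul_le_mul_right this hpq

end StrongConvexity

section Bifunction

variable {m₁ m₂ : ℕ} {f : E m₁ → E m₂ → ℝ}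

lemma contDiff_grad₂_left (hf : ContDiff ℝ 2 (fun p : E m₁ × E m₂ => f p.1 p.2)) (w : E m₂) :
    ContDiff ℝ 1 (fun u => grad₂ f u w) :=
  (InnerProductSpace.toDual ℝ (E m₂)).symm.contDiff.comp
    (hf.fderiv (g := fun _ => w) contDiff_const (by norm_num))

lemma norm_grad₂_sub_le_of_frobNorm_jac₂₁_le
    (hf : ContDiff ℝ 2 (fun p : E m₁ × E m₂ => f p.1 p.2)) {Ω : Set (E m₁)} (hΩ : Convex ℝ Ω)
    {K : ℝ} {w : E m₂} (hK : ∀ u ∈ Ω, frobNorm (jac₂₁ f u w) ≤ K) {u v : E m₁} (hu : u ∈ Ω)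
    (hv : v ∈ Ω) :
    ‖grad₂ f u w - grad₂ f v w‖ ≤ K * ‖u - v‖ :=
  hΩ.norm_image_sub_le_of_norm_fderiv_le (f := fun u => grad₂ f u w)
    (fun _ _ => ((contDiff_grad₂_left hf w).differentiable one_ne_zero).differentiableAt)
    (fun u hu => (opNorm_le_frobNorm _).trans (hK u hu)) hv hu

lemma sub_sub_sub_le_of_frobNorm_jac₂₁_le
    (hf : ContDiff ℝ 2 (fun p : E m₁ × E m₂ => f p.1 p.2)) {Ω : Set (E m₁)} (hΩ : Convex ℝ Ω)
    {K : ℝ} (hK : ∀ u ∈ Ω, ∀ w, frobNorm (jac₂₁ f u w) ≤ K) {u v : E m₁} (hu : u ∈ Ω)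
    (hv : v ∈ Ω) (p q : E m₂) :
    (f u q - f v q) - (f u p - f v p) ≤ K * ‖u - v‖ * ‖q - p‖ := by
  have hdiff : ∀ u, Differentiable ℝ (f u) := fun u =>
    (hf.comp (contDiff_const.prodMk contDiff_id)).differentiable (by norm_num)
  have hbound : ∀ w, ‖fderiv ℝ (fun w => f u w - f v w) w‖ ≤ K * ‖u - v‖ := by
    intro w
    rw [fderiv_fun_sub (hdiff u w) (hdiff v w), ← toDual_gradient, ← toDual_gradient, ← map_sub,
      LinearIsometryEquiv.norm_map]
    exact norm_grad₂_sub_le_of_frobNorm_jac₂₁_le hf hΩ (fun u hu => hK u hu w) hu hv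
  exact (le_abs_self _).trans <| convex_univ.norm_image_sub_le_of_norm_fderiv_le
    (fun w _ => ((hdiff u).sub (hdiff v)) w) (fun w _ => hbound w) trivial trivial

end Bifunction

theorem aggregation_lipschitz_general (n m₁ m₂ : ℕ) (hn : 0 < n) (μ K₃ : ℝ) (hμ : 0 < μ)
    (Ω : Fin n → Set (E m₁))
    (hΩne : ∀ i, (Ω i).Nonempty) (hΩconv : ∀ i, Convex ℝ (Ω i))
    (g : Fin n → E m₁ → E m₂ → ℝ)
    (hg : ∀ j, ContDiff ℝ 2 (fun p : E m₁ × E m₂ => g j p.1 p.2))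
    (hgsc : ∀ j u, StrongConvexOn Set.univ μ (g j u))
    (σ : (Fin n → E m₁) → E m₂)
    (hσ : ∀ x y, ∑ j, g j (x j) (σ x) ≤ ∑ j, g j (x j) y)
    (hK₃ : ∀ j, ∀ u ∈ Ω j, ∀ y : E m₂, frobNorm (jac₂₁ (g j) u y) ≤ K₃) :
    ∀ x y : Fin n → E m₁, (∀ i, x i ∈ Ω i) → (∀ i, y i ∈ Ω i) →
      ‖σ x - σ y‖ ≤ K₃ / (Real.sqrt n * μ) * Real.sqrt (∑ i, ‖x i - y i‖ ^ 2) := by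
  intro x y hx hy
  have hK₃_nonneg : 0 ≤ K₃ := by
    obtain ⟨u, hu⟩ := hΩne ⟨0, hn⟩
    exact (Real.sqrt_nonneg _).trans (hK₃ _ u hu 0)
  have hconv (z : Fin n → E m₁) :
      StrongConvexOn Set.univ (n * μ) (fun w => ∑ j, g j (z j) w) := by
    simpa using StrongConvexOn.sum convex_univ (t := univ) fun j _ => hgsc j (z j)
  have hmin (z : Fin n → E m₁) : IsMinOn (fun w => ∑ j, g j (z j) w) Set.univ (σ z) :=
    fun w _ => hσ z w
  have hperturb : (∑ j, g j (x j) (σ y) - ∑ j, g j (y j) (σ y))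
      - (∑ j, g j (x j) (σ x) - ∑ j, g j (y j) (σ x))
      ≤ (∑ j, K₃ * ‖x j - y j‖) * ‖σ x - σ y‖ := by
    simp only [← sum_sub_distrib, sum_mul, norm_sub_rev (σ x)]
    exact sum_le_sum fun j _ =>
      sub_sub_sub_le_of_frobNorm_jac₂₁_le (hg j) (hΩconv j) (hK₃ j) (hx j) (hy j) _ _
  have hstab : n * μ * ‖σ x - σ y‖ ≤ K₃ * (√n * √(∑ i, ‖x i - y i‖ ^ 2)) :=
    ((hconv x).mul_norm_sub_le_of_isMinOn (hconv y) (hmin x) (hmin y) trivial trivial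
      (by positivity) hperturb).trans <| by
        rw [← mul_sum]
        simpa using mul_le_mul_of_nonneg_left
          (sum_le_sqrt_card_mul_sqrt_sum_sq univ fun i => ‖x i - y i‖) hK₃_nonneg
  have hsqrt_n : 0 < √(n : ℝ) := Real.sqrt_pos.2 (Nat.cast_pos.2 hn)
  rw [div_mul_eq_mul_div, le_div_iff₀ (by positivity)]
  refine le_of_mul_le_mul_left ?_ hsqrt_n
  calc √n * (‖σ x - σ y‖ * (√n * μ)) = (√n * √n) * μ * ‖σ x - σ y‖ := by ring
    _ = n * μ * ‖σ x - σ y‖ := by rw [Real.mul_self_sqrt n.cast_nonneg]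
    _ ≤ √n * (K₃ * √(∑ i, ‖x i - y i‖ ^ 2)) := hstab.trans_eq (by ring)

/-- the aggregation map `σ` is `ℓ`-Lipschitz on `Ω` with
`ℓ = K₃/(√n μ)`, i.e. `‖σ(x) − σ(y)‖ ≤ (K₃/(√n μ))‖x − y‖` for all `x, y ∈ Ω`
(the norm on `Ω ⊂ (ℝ^{m₁})ⁿ` being the Euclidean product norm). -/
theorem aggregation_lipschitz (n m₁ m₂ : ℕ) (hn : 0 < n) (μ K₃ : ℝ) (hμ : 0 < μ)
    (Ω : Fin n → Set (E m₁))
    (hΩne : ∀ i, (Ω i).Nonempty) (hΩconv : ∀ i, Convex ℝ (Ω i))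
    (hΩcomp : ∀ i, IsCompact (Ω i))
    (g : Fin n → E m₁ → E m₂ → ℝ)
    (hg : ∀ j, ContDiff ℝ 2 (fun p : E m₁ × E m₂ => g j p.1 p.2))
    (hgsc : ∀ j u, StrongConvexOn Set.univ μ (g j u))
    (σ : (Fin n → E m₁) → E m₂)
    (hσ : ∀ x y, ∑ j, g j (x j) (σ x) ≤ ∑ j, g j (x j) y)
    (hK₃ : ∀ j, ∀ u ∈ Ω j, ∀ y : E m₂, frobNorm (jac₂₁ (g j) u y) ≤ K₃) :
    ∀ x y : Fin n → E m₁, (∀ i, x i ∈ Ω i) → (∀ i, y i ∈ Ω i) →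
      ‖σ x - σ y‖ ≤ K₃ / (Real.sqrt n * μ) * Real.sqrt (∑ i, ‖x i - y i‖ ^ 2) :=
  aggregation_lipschitz_general n m₁ m₂ hn μ K₃ hμ Ω hΩne hΩconv g hg hgsc σ hσ hK₃
end
end

section
/- Let {ξ_t}_{t≥0} be a nonnegative real sequence satisfying ξ_{t+1} ≤ (1 − b₁/(t+a))ξ_t + b₂/(t+a)² + b₃cᵗ + b₄/(t+a) for all t ≥ 0, where b₁, b₂, b₃, b₄ > 0. If b₁ ≥ 1, a > b₁ and 0 < c < 1, then for all t ≥ 0: ξ_t ≤ (c₁(ln(t+a) + 1) + 2^{b₁})/(t − 1 + a) + c₂cᵗ + 2b₄, where c₁ = (aξ₀ + 2b₂ + 2^{b₁}b₂ + b₃) c^{1−⌈1+a⌉}/(1−c)² and c₂ = 2^{b₁}b₃/c. -/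
/-!
Since `b₁ ≥ 1`, the weighted quantity `(t - 1 + a) ξ_t` grows at each step by at most
`e_t = b₂/(t+a) + b₃ (t+a) cᵗ + b₄`, so it is bounded by `(a - 1) ξ₀ + ∑_{s<t} e_s`.
The harmonic part of this sum is at most `ln(t+a) + 1`; for an integer `n ≥ a` the geometric part
is at most `c⁻ⁿ ∑_k k cᵏ = c^{1-n}/(1-c)²`, which with `n = ⌈1+a⌉` is the factor of `c₁`.
This factor is at least `1`, so all remaining terms are absorbed into `c₁ (ln(t+a) + 1)`.
-/

open Finset Real

lemma one_div_add_one_le_log_sub_log {x : ℝ} (hx : 0 < x) :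
    1 / (x + 1) ≤ log (x + 1) - log x := by
  have h := one_sub_inv_le_log_of_pos (div_pos (by linarith : 0 < x + 1) hx)
  rw [log_div (by linarith) hx.ne', inv_div] at h
  calc 1 / (x + 1) = 1 - x / (x + 1) := by field_simp; ring
    _ ≤ _ := h

lemma sum_range_one_div_add_le {a : ℝ} (ha : 0 < a) (t : ℕ) :
    ∑ s ∈ range t, 1 / ((s : ℝ) + a) ≤ 1 / a + log (t + a) - log a := by
  have htelescope : ∑ s ∈ range t, 1 / ((s : ℝ) + 1 + a) ≤ log (t + a) - log a :=
    calc ∑ s ∈ range t, 1 / ((s : ℝ) + 1 + a)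
        ≤ ∑ s ∈ range t, (log (((s + 1 : ℕ) : ℝ) + a) - log ((s : ℝ) + a)) := by
          gcongr with s
          simpa [add_right_comm] using
            one_div_add_one_le_log_sub_log (by positivity : 0 < (s : ℝ) + a)
      _ = log (t + a) - log a := by
          rw [sum_range_sub (fun s : ℕ => log ((s : ℝ) + a))]; simp
  calc ∑ s ∈ range t, 1 / ((s : ℝ) + a) ≤ ∑ s ∈ range (t + 1), 1 / ((s : ℝ) + a) :=
        sum_le_sum_of_subset_of_nonneg (range_subset_range.2 t.le_succ)
          (fun s _ _ => by positivity)
    _ = ∑ s ∈ range t, 1 / ((s : ℝ) + 1 + a) + 1 / a := by rw [sum_range_succ']; simp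
    _ ≤ _ := by linarith

lemma sum_range_add_mul_pow_le {a c : ℝ} {n : ℤ} (ha : 0 ≤ a) (hc₀ : 0 < c) (hc₁ : c < 1)
    (han : a ≤ n) (t : ℕ) :
    ∑ s ∈ range t, ((s : ℝ) + a) * c ^ s ≤ c ^ (1 - n) / (1 - c) ^ 2 := by
  lift n to ℕ using (by exact_mod_cast ha.trans han)
  push_cast at han
  have hsum : HasSum (fun k : ℕ => (k : ℝ) * c ^ k) (c / (1 - c) ^ 2) :=
    hasSum_coe_mul_geometric_of_norm_lt_one (by rwa [norm_of_nonneg hc₀.le])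
  have htail : ∑ s ∈ range t, ((s : ℝ) + n) * c ^ (n + s) ≤ c / (1 - c) ^ 2 :=
    calc ∑ s ∈ range t, ((s : ℝ) + n) * c ^ (n + s)
        ≤ ∑ k ∈ range n, (k : ℝ) * c ^ k + ∑ s ∈ range t, ((n + s : ℕ) : ℝ) * c ^ (n + s) := by
          push_cast
          simp only [add_comm (n : ℝ)]
          exact le_add_of_nonneg_left (sum_nonneg fun k _ => by positivity)
      _ = ∑ k ∈ range (n + t), (k : ℝ) * c ^ k := (sum_range_add _ n t).symm
      _ ≤ _ := sum_le_hasSum _ (fun k _ => by positivity) hsum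
  calc ∑ s ∈ range t, ((s : ℝ) + a) * c ^ s ≤ ∑ s ∈ range t, ((s : ℝ) + n) * c ^ s := by
        gcongr
    _ = (c ^ n)⁻¹ * ∑ s ∈ range t, ((s : ℝ) + n) * c ^ (n + s) := by
        rw [mul_sum]
        refine sum_congr rfl fun s _ => ?_
        rw [pow_add]
        field_simp
    _ ≤ (c ^ n)⁻¹ * (c / (1 - c) ^ 2) := by gcongr
    _ = _ := by rw [zpow_sub₀ hc₀.ne', zpow_one, zpow_natCast]; ring

lemma one_le_zpow_one_sub_div_one_sub_sq {c : ℝ} {n : ℤ} (hc₀ : 0 < c) (hc₁ : c < 1)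
    (hn : 1 ≤ n) : 1 ≤ c ^ (1 - n) / (1 - c) ^ 2 := by
  rw [le_div_iff₀ (by nlinarith)]
  calc 1 * (1 - c) ^ 2 ≤ 1 := by nlinarith
    _ ≤ c ^ (1 - n) := one_le_zpow_of_nonpos₀ hc₀ hc₁.le (by omega)

lemma sub_one_add_mul_le_add_sum {a b : ℝ} {ξ e : ℕ → ℝ} (ha : 0 < a)
    (hb : 1 ≤ b) (hξ : ∀ t, 0 ≤ ξ t)
    (hrec : ∀ t : ℕ, ξ (t + 1) ≤ (1 - b / ((t : ℝ) + a)) * ξ t + e t / ((t : ℝ) + a))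
    (t : ℕ) : ((t : ℝ) - 1 + a) * ξ t ≤ (a - 1) * ξ 0 + ∑ s ∈ range t, e s := by
  induction t with
  | zero => simp [neg_add_eq_sub]
  | succ t ih =>
    have hta : 0 < (t : ℝ) + a := by positivity
    have hstep : ((t : ℝ) + a) * ξ (t + 1) ≤ ((t : ℝ) - 1 + a) * ξ t + e t :=
      calc ((t : ℝ) + a) * ξ (t + 1)
          ≤ ((t : ℝ) + a) * ((1 - b / ((t : ℝ) + a)) * ξ t + e t / ((t : ℝ) + a)) := by
            gcongr; exact hrec t
        _ = ((t : ℝ) + a - b) * ξ t + e t := by field_simp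
        _ ≤ _ := by nlinarith [mul_nonneg (sub_nonneg.2 hb) (hξ t)]
    rw [sum_range_succ]
    push_cast
    linarith

lemma sub_one_add_mul_le_of_rec {a b₁ b₂ b₃ b₄ c : ℝ} {n : ℤ} {ξ : ℕ → ℝ}
    (hb₂ : 0 ≤ b₂) (hb₃ : 0 ≤ b₃) (hc₀ : 0 < c) (hc₁ : c < 1) (hb₁ : 1 ≤ b₁) (ha : 1 ≤ a)
    (han : a ≤ n) (hξ : ∀ t, 0 ≤ ξ t)
    (hrec : ∀ t : ℕ,
      ξ (t + 1) ≤ (1 - b₁ / ((t : ℝ) + a)) * ξ t + b₂ / ((t : ℝ) + a) ^ 2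
        + b₃ * c ^ t + b₄ / ((t : ℝ) + a))
    (t : ℕ) :
    ((t : ℝ) - 1 + a) * ξ t
      ≤ (a - 1) * ξ 0 + b₂ * (log (t + a) + 1) + b₃ * (c ^ (1 - n) / (1 - c) ^ 2) + b₄ * t := by
  have hweighted := sub_one_add_mul_le_add_sum (a := a)
    (e := fun s => b₂ * (1 / ((s : ℝ) + a)) + b₃ * (((s : ℝ) + a) * c ^ s) + b₄)
    (by linarith) hb₁ hξ (fun s => (hrec s).trans_eq (by field_simp; ring)) t
  simp only [sum_add_distrib, ← mul_sum, sum_const, card_range, nsmul_eq_mul] at hweighted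
  have hharm : ∑ s ∈ range t, 1 / ((s : ℝ) + a) ≤ log (t + a) + 1 := by
    linarith [sum_range_one_div_add_le (a := a) (by linarith) t, log_nonneg ha,
      (div_le_one₀ (by linarith : 0 < a)).2 ha]
  have hgeom := sum_range_add_mul_pow_le (by linarith) hc₀ hc₁ han t
  linarith [mul_le_mul_of_nonneg_left hharm hb₂, mul_le_mul_of_nonneg_left hgeom hb₃]

theorem recursion_rate_estimate_general (a b₁ b₂ b₃ b₄ c : ℝ) (ξ : ℕ → ℝ)
    (hb₂ : 0 < b₂) (hb₃ : 0 < b₃) (hb₄ : 0 < b₄)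
    (hc : 0 < c) (hc1 : c < 1) (hb₁one : 1 ≤ b₁) (ha : b₁ < a)
    (hnonneg : ∀ t, 0 ≤ ξ t)
    (hrec : ∀ t : ℕ,
      ξ (t + 1) ≤ (1 - b₁ / ((t : ℝ) + a)) * ξ t + b₂ / ((t : ℝ) + a) ^ 2
        + b₃ * c ^ t + b₄ / ((t : ℝ) + a))
    (c₁ c₂ : ℝ)
    (hc₁ : c₁ = (a * ξ 0 + 2 * b₂ + (2 : ℝ) ^ b₁ * b₂ + b₃)
        * c ^ ((1 : ℤ) - ⌈(1 : ℝ) + a⌉) / (1 - c) ^ 2)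
    (hc₂ : c₂ = (2 : ℝ) ^ b₁ * b₃ / c) :
    ∀ t : ℕ,
      ξ t ≤ (c₁ * (Real.log ((t : ℝ) + a) + 1) + (2 : ℝ) ^ b₁) / ((t : ℝ) - 1 + a)
        + c₂ * c ^ t + 2 * b₄ := by
  intro t
  have ha₁ : 1 < a := hb₁one.trans_lt ha
  have ht : 0 < (t : ℝ) - 1 + a := by linarith [t.cast_nonneg (α := ℝ)]
  have hbound := sub_one_add_mul_le_of_rec hb₂.le hb₃.le hc hc1 hb₁one ha₁.le
    (by linarith [Int.le_ceil (1 + a)]) hnonneg hrec t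
  set L := log ((t : ℝ) + a)
  set K := c ^ ((1 : ℤ) - ⌈(1 : ℝ) + a⌉) / (1 - c) ^ 2
  have hK : 1 ≤ K :=
    one_le_zpow_one_sub_div_one_sub_sq hc hc1 (Int.one_le_ceil_iff.2 (by linarith))
  have hL : 0 ≤ L := log_nonneg (by linarith [t.cast_nonneg (α := ℝ)])
  have hKL : 1 ≤ K * (L + 1) := one_le_mul_of_one_le_of_one_le hK (by linarith)
  have hc₁L : c₁ * (L + 1) = (a * ξ 0 + 2 * b₂ + (2 : ℝ) ^ b₁ * b₂ + b₃) * (K * (L + 1)) := by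
    rw [hc₁]; ring
  have hξt : ξ t ≤ c₁ * (L + 1) / ((t : ℝ) - 1 + a) + b₄ := by
    rw [div_add' _ _ _ ht.ne', le_div_iff₀ ht]
    have hξ₀ : a * ξ 0 ≤ a * ξ 0 * (K * (L + 1)) :=
      le_mul_of_one_le_right (mul_nonneg (by linarith) (hnonneg 0)) hKL
    have hb₂L : b₂ * (L + 1) ≤ b₂ * (K * (L + 1)) := by
      gcongr; exact le_mul_of_one_le_left (by linarith) hK
    have hb₃K : b₃ * K ≤ b₃ * (K * (L + 1)) := by
      gcongr; exact le_mul_of_one_le_right (by linarith) (by linarith)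
    linarith [hnonneg 0, mul_nonneg hb₄.le (by linarith : 0 ≤ a - 1),
      mul_nonneg hb₂.le (by linarith : 0 ≤ K * (L + 1)),
      mul_nonneg (mul_nonneg (rpow_nonneg zero_le_two b₁) hb₂.le) (by linarith : 0 ≤ K * (L + 1))]
  have hc₂t : 0 ≤ c₂ * c ^ t := by rw [hc₂]; positivity
  have h2b₁ : 0 ≤ (2 : ℝ) ^ b₁ / ((t : ℝ) - 1 + a) := by positivity
  rw [add_div]
  linarith

/-- Lemma 8 of the paper: if a nonnegative sequence `ξ` satisfies
`ξ_{t+1} ≤ (1 − b₁/(t+a))ξ_t + b₂/(t+a)² + b₃ cᵗ + b₄/(t+a)` with `b₁,…,b₄ > 0`,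
`b₁ ≥ 1`, `a > b₁` and `0 < c < 1`, then for all `t ≥ 0`
`ξ_t ≤ (c₁(ln(t+a) + 1) + 2^{b₁})/(t − 1 + a) + c₂ cᵗ + 2 b₄`, where
`c₁ = (aξ₀ + 2b₂ + 2^{b₁}b₂ + b₃) c^{1−⌈1+a⌉}/(1−c)²` and `c₂ = 2^{b₁} b₃ / c`. -/
theorem recursion_rate_estimate (a b₁ b₂ b₃ b₄ c : ℝ) (ξ : ℕ → ℝ)
    (hb₁ : 0 < b₁) (hb₂ : 0 < b₂) (hb₃ : 0 < b₃) (hb₄ : 0 < b₄)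
    (hc : 0 < c) (hc1 : c < 1) (hb₁one : 1 ≤ b₁) (ha : b₁ < a)
    (hnonneg : ∀ t, 0 ≤ ξ t)
    (hrec : ∀ t : ℕ,
      ξ (t + 1) ≤ (1 - b₁ / ((t : ℝ) + a)) * ξ t + b₂ / ((t : ℝ) + a) ^ 2
        + b₃ * c ^ t + b₄ / ((t : ℝ) + a))
    (c₁ c₂ : ℝ)
    (hc₁ : c₁ = (a * ξ 0 + 2 * b₂ + (2 : ℝ) ^ b₁ * b₂ + b₃)
        * c ^ ((1 : ℤ) - ⌈(1 : ℝ) + a⌉) / (1 - c) ^ 2)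
    (hc₂ : c₂ = (2 : ℝ) ^ b₁ * b₃ / c) :
    ∀ t : ℕ,
      ξ t ≤ (c₁ * (Real.log ((t : ℝ) + a) + 1) + (2 : ℝ) ^ b₁) / ((t : ℝ) - 1 + a)
        + c₂ * c ^ t + 2 * b₄ :=
  recursion_rate_estimate_general a b₁ b₂ b₃ b₄ c ξ hb₂ hb₃ hb₄ hc hc1 hb₁one ha hnonneg hrec c₁ c₂
    hc₁ hc₂
end

section
/- For any a > 0 and 0 < r < 1, and all integers t ≥ 0: Σ_{s=0}^t r^{−s}/(s+a) ≤ δ₁ r^{−t}/(t+a) + δ₂/(t+a) + δ₃, where t₀ = max(⌈2/ln(r^{−1}) − a⌉ + 1, 1), δ₁ = (t₀+a)/(r(ln(r^{−1})(t₀+a) − 2)), δ₂ = t₀ r^{−t₀}(t₀+a)/a, and δ₃ = 2t₀ r^{−t₀}(t₀+a)/(a²(ln(r^{−1})(t₀+a) − 2)) + 1/a. -/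
/-!
Write `f s = r⁻ˢ / (s + a)`, `L = log r⁻¹` and `u = t₀ + a`, so that `L u > 2`. From `t₀` on the
series grows geometrically: with `δ₁ = u / (r (L u - 2))` one has
`δ₁ f m + f (m + 1) ≤ δ₁ f (m + 1)` for `m ≥ t₀`, because after clearing denominators and using `r⁻¹ ≥ 1 + L` this reduces to
`u ≤ 2 (m + a)`. Hence the tail `∑_{t₀ ≤ s ≤ t} f s` telescopes to at most `δ₁ f t`. Every term
with `s ≤ t₀` is at most `r^(-t₀) / a`, which bounds the head `∑_{s < t₀} f s` by `δ₃` (if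
`t₀ ≥ 2`, the ceiling forces `a L < 2`) and the whole sum by `δ₂ / (t + a)` when `t < t₀`.
-/

open Finset Real

lemma lt_max_ceil_add_one (x : ℝ) : x < ((max (⌈x⌉ + 1) 1 : ℤ) : ℝ) := by
  have h : (⌈x⌉ : ℝ) + 1 ≤ ((max (⌈x⌉ + 1) 1 : ℤ) : ℝ) := by exact_mod_cast le_max_left _ _
  linarith [Int.le_ceil x]

lemma max_ceil_add_one_eq_one_or_pos (x : ℝ) : max (⌈x⌉ + 1) 1 = 1 ∨ 0 < x := by
  rcases le_or_gt x 0 with hx | hx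
  · left
    have : ⌈x⌉ ≤ 0 := Int.ceil_le.mpr (by exact_mod_cast hx)
    omega
  · exact Or.inr hx

lemma sum_Ico_le_mul_of_step {α : Type*} [Semiring α] [PartialOrder α] [IsOrderedAddMonoid α]
    {f : ℕ → α} {δ : α} {n : ℕ} (hbase : f n ≤ δ * f n)
    (hstep : ∀ m, n ≤ m → δ * f m + f (m + 1) ≤ δ * f (m + 1)) :
    ∀ t, n ≤ t → ∑ s ∈ Ico n (t + 1), f s ≤ δ * f t := by
  intro t ht
  induction t, ht using Nat.le_induction with
  | base => simpa using hbase
  | succ m hm ih =>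
    rw [sum_Ico_succ_top (by omega)]
    exact (add_le_add ih le_rfl).trans (hstep m hm)

noncomputable def geomOverLinear (r a : ℝ) (s : ℕ) : ℝ := r ^ (-(s : ℤ)) / (s + a)

namespace geomOverLinear

variable {r a : ℝ}

lemma le_zpow_neg_div_of_le (hr : 0 < r) (hr1 : r ≤ 1) (ha : 0 < a) {s N : ℕ} (hs : s ≤ N) :
    geomOverLinear r a s ≤ r ^ (-(N : ℤ)) / a :=
  div_le_div₀ (by positivity) (zpow_le_zpow_right_of_le_one₀ hr hr1 (by omega)) ha
    (by linarith [Nat.cast_nonneg (α := ℝ) s])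

lemma sum_range_le (hr : 0 < r) (hr1 : r ≤ 1) (ha : 0 < a) {n N : ℕ} (hn : n ≤ N) :
    ∑ s ∈ range n, geomOverLinear r a s ≤ N * r ^ (-(N : ℤ)) / a := by
  have hterms := sum_le_card_nsmul (range n) (geomOverLinear r a) (r ^ (-(N : ℤ)) / a)
    fun s hs ↦ le_zpow_neg_div_of_le hr hr1 ha ((mem_range.mp hs).le.trans hn)
  rw [card_range, nsmul_eq_mul] at hterms
  rw [mul_div_assoc]
  exact hterms.trans (by gcongr)

lemma mul_add_succ_le_mul_succ {δ : ℝ} (hr : 0 < r) {m : ℕ} (hv : 0 < m + a)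
    (h : (m + a) + δ * r * (m + a + 1) ≤ δ * (m + a)) :
    δ * geomOverLinear r a m + geomOverLinear r a (m + 1) ≤ δ * geomOverLinear r a (m + 1) := by
  have hshift : r ^ (-(m : ℤ)) = r * r ^ (-((m : ℤ) + 1)) := by
    rw [neg_add, zpow_add₀ hr.ne', zpow_neg_one]
    field_simp
  set P := r ^ (-((m : ℤ) + 1))
  have hP : 0 < P := zpow_pos hr _
  have hv1 : 0 < (m : ℝ) + 1 + a := by linarith
  simp only [geomOverLinear, Nat.cast_succ, hshift]
  rw [← sub_nonneg]
  have hexpand : δ * (P / (m + 1 + a)) - (δ * (r * P / (m + a)) + P / (m + 1 + a)) =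
      P * (δ * (m + a) - (m + a) - δ * r * (m + a + 1)) / ((m + a) * (m + a + 1)) := by
    field_simp
    ring
  rw [hexpand]
  exact div_nonneg (mul_nonneg hP.le (by linarith)) (by positivity)

lemma sum_range_succ_le_of_lt (hr : 0 < r) (hr1 : r ≤ 1) (ha : 0 < a) {t n : ℕ} (htn : t < n) :
    ∑ s ∈ range (t + 1), geomOverLinear r a s ≤ n * r ^ (-(n : ℤ)) * (n + a) / a / (t + a) := by
  have hta : 0 < (t : ℝ) + a := by positivity
  have hn : (t : ℝ) + a ≤ n + a := by gcongr
  calc ∑ s ∈ range (t + 1), geomOverLinear r a s ≤ n * r ^ (-(n : ℤ)) / a :=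
        sum_range_le hr hr1 ha htn
    _ ≤ n * r ^ (-(n : ℤ)) / a * ((n + a) / (t + a)) :=
        le_mul_of_one_le_right (by positivity) ((one_le_div hta).mpr hn)
    _ = n * r ^ (-(n : ℤ)) * (n + a) / a / (t + a) := by ring

lemma sum_range_le_of_eq_one_or_mul_lt_two {L : ℝ} (hr : 0 < r) (hr1 : r ≤ 1) (ha : 0 < a)
    {n : ℕ} (hLu : 2 < L * (n + a)) (hn : n = 1 ∨ a * L < 2) :
    ∑ s ∈ range n, geomOverLinear r a s ≤
      2 * n * r ^ (-(n : ℤ)) * (n + a) / (a ^ 2 * (L * (n + a) - 2)) + 1 / a := by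
  have hc : 0 < L * (n + a) - 2 := by linarith
  rcases hn with rfl | haL
  · simp only [range_one, sum_singleton, geomOverLinear, Nat.cast_zero, neg_zero, zpow_zero,
      zero_add, le_add_iff_nonneg_left]
    positivity
  have hu : 0 < (n : ℝ) + a := by positivity
  have hR : 0 < r ^ (-(n : ℤ)) := zpow_pos hr _
  have hac : a * (L * (n + a) - 2) ≤ 2 * (n + a) := by nlinarith [mul_lt_mul_of_pos_right haL hu]
  calc ∑ s ∈ range n, geomOverLinear r a s ≤ n * r ^ (-(n : ℤ)) / a := sum_range_le hr hr1 ha le_rfl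
    _ ≤ 2 * n * r ^ (-(n : ℤ)) * (n + a) / (a ^ 2 * (L * (n + a) - 2)) := by
        rw [div_le_div_iff₀ ha (by positivity)]
        have := mul_le_mul_of_nonneg_left hac (by positivity : (0 : ℝ) ≤ n * r ^ (-(n : ℤ)) * a)
        linarith
    _ ≤ _ := le_add_of_nonneg_right (by positivity)

lemma sum_Ico_le {L : ℝ} (hr : 0 < r) (hL : 1 + L ≤ r⁻¹) {n : ℕ} (hu : 0 < n + a)
    (hLu : 2 < L * (n + a)) :
    ∀ t, n ≤ t → ∑ s ∈ Ico n (t + 1), geomOverLinear r a s ≤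
      (n + a) / (r * (L * (n + a) - 2)) * geomOverLinear r a t := by
  set u : ℝ := n + a
  set δ := u / (r * (L * u - 2))
  have hc : 0 < L * u - 2 := by linarith
  have hδ0 : 0 ≤ δ := by positivity
  have hstep : ∀ v, u ≤ v → v + δ * r * (v + 1) ≤ δ * v := by
    intro v huv
    have hδr : δ * r = u / (L * u - 2) := by
      rw [div_mul_eq_mul_div, mul_comm u r, mul_div_mul_left _ _ hr.ne']
    have hδv : δ * v = δ * r * (v * r⁻¹) := by field_simp
    have hkey : v * (L * u - 2) + u * (v + 1) ≤ u * (v * r⁻¹) := by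
      nlinarith [mul_le_mul_of_nonneg_left hL (mul_nonneg hu.le (hu.le.trans huv))]
    rw [hδv, hδr, div_mul_eq_mul_div, div_mul_eq_mul_div, le_div_iff₀ hc, add_mul,
      div_mul_cancel₀ _ hc.ne']
    linarith
  have hδ : 1 ≤ δ := by
    have := hstep u le_rfl
    nlinarith [mul_nonneg (mul_nonneg hδ0 hr.le) hu.le]
  refine sum_Ico_le_mul_of_step
    (le_mul_of_one_le_left (div_nonneg (zpow_pos hr _).le hu.le) hδ) fun m hm ↦ ?_
  have hum : u ≤ m + a := by simp only [u]; gcongr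
  exact mul_add_succ_le_mul_succ hr (hu.trans_le hum) (hstep _ hum)

end geomOverLinear

/-- Lemma 9 of the paper: for any `a > 0` and `0 < r < 1`, and all
integers `t ≥ 0`: `∑_{s=0}^t r^{−s}/(s+a) ≤ δ₁ r^{−t}/(t+a) + δ₂/(t+a) + δ₃`, where
`t₀ = max(⌈2/ln(r^{−1}) − a⌉ + 1, 1)`, `δ₁ = (t₀+a)/(r(ln(r^{−1})(t₀+a) − 2))`,
`δ₂ = t₀ r^{−t₀}(t₀+a)/a`, and
`δ₃ = 2 t₀ r^{−t₀}(t₀+a)/(a²(ln(r^{−1})(t₀+a) − 2)) + 1/a`. -/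
theorem sum_inv_geom_div_linear_le (a r : ℝ) (ha : 0 < a) (hr : 0 < r) (hr1 : r < 1)
    (t₀ : ℤ) (ht₀ : t₀ = max (⌈2 / Real.log r⁻¹ - a⌉ + 1) 1)
    (δ₁ δ₂ δ₃ : ℝ)
    (hδ₁ : δ₁ = ((t₀ : ℝ) + a) / (r * (Real.log r⁻¹ * ((t₀ : ℝ) + a) - 2)))
    (hδ₂ : δ₂ = (t₀ : ℝ) * r ^ (-t₀) * ((t₀ : ℝ) + a) / a)
    (hδ₃ : δ₃ = 2 * (t₀ : ℝ) * r ^ (-t₀) * ((t₀ : ℝ) + a)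
        / (a ^ 2 * (Real.log r⁻¹ * ((t₀ : ℝ) + a) - 2)) + 1 / a) :
    ∀ t : ℕ,
      ∑ s ∈ Finset.range (t + 1), r ^ (-(s : ℤ)) / ((s : ℝ) + a) ≤
        δ₁ * r ^ (-(t : ℤ)) / ((t : ℝ) + a) + δ₂ / ((t : ℝ) + a) + δ₃ := by
  intro t
  have hL : 0 < log r⁻¹ := log_pos (one_lt_inv_iff₀.mpr ⟨hr, hr1⟩)
  have hL1 : 1 + log r⁻¹ ≤ r⁻¹ := by linarith [log_le_sub_one_of_pos (inv_pos.mpr hr)]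
  have hlt := lt_max_ceil_add_one (2 / log r⁻¹ - a)
  have hcases := max_ceil_add_one_eq_one_or_pos (2 / log r⁻¹ - a)
  rw [← ht₀] at hlt hcases
  obtain ⟨n, rfl⟩ : ∃ n : ℕ, (n : ℤ) = t₀ :=
    ⟨t₀.toNat, Int.toNat_of_nonneg (ht₀ ▸ le_max_of_le_right zero_le_one)⟩
  push_cast at hlt hδ₁ hδ₂ hδ₃
  have hLu : 2 < log r⁻¹ * (n + a) := by
    rw [mul_comm, ← div_lt_iff₀ hL]; linarith
  have hn : n = 1 ∨ a * log r⁻¹ < 2 := hcases.imp (by exact_mod_cast ·)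
    fun h ↦ (lt_div_iff₀ hL).mp (by linarith)
  have hδ₁0 : 0 ≤ δ₁ := hδ₁ ▸ div_nonneg (by positivity) (mul_pos hr (by linarith)).le
  change ∑ s ∈ range (t + 1), geomOverLinear r a s ≤ _
  rcases lt_or_ge t n with htn | htn
  · have hδ₃0 : 0 ≤ δ₃ :=
      hδ₃ ▸ add_nonneg (div_nonneg (by positivity) (mul_pos (by positivity) (by linarith)).le)
        (by positivity)
    have hsum := geomOverLinear.sum_range_succ_le_of_lt hr hr1.le ha htn
    rw [← hδ₂] at hsum
    have hfirst : 0 ≤ δ₁ * r ^ (-(t : ℤ)) / (t + a) := by positivity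
    linarith
  · rw [← sum_range_add_sum_Ico _ (by omega : n ≤ t + 1)]
    have head := geomOverLinear.sum_range_le_of_eq_one_or_mul_lt_two hr hr1.le ha hLu hn
    have tail := geomOverLinear.sum_Ico_le hr hL1 (by positivity) hLu t htn
    have hsecond : 0 ≤ δ₂ / (t + a) := hδ₂ ▸ by positivity
    rw [geomOverLinear, ← hδ₁, ← mul_div_assoc] at tail
    linarith
end

section
/- Let h: ℝ^N → ℝ be differentiable and μ-strongly convex with L-Lipschitz gradient, and let 𝐁 be a symmetric positive semidefinite N×N matrix with largest eigenvalue λ_max > 0 and smallest nonzero eigenvalue λ₊ > 0. Suppose (y*, λ*) satisfies ∇h(y*) + 𝐁λ* = 0 and 𝐁y* = 0, let 0 < κ < min(1/L, μ/λ_max²), and let (y, λ) be such that λ − λ* is orthogonal to the kernel of 𝐁. Define y⁺ = y − κ(𝐁λ + ∇h(y)) and λ⁺ = λ + κ𝐁y⁺. Then (1 − κ²λ_max²)‖y⁺ − y*‖² + ‖λ⁺ − λ*‖² ≤ γ₀ [(1 − κ²λ_max²)‖y − y*‖² + ‖λ − λ*‖²], where γ₀ = max(1 − κμ(1 − κL),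 1 − κ²λ₊²) ∈ [0, 1). -/
open scoped RealInnerProductSpace

/-!
Write `e`, `d` for the primal and dual errors and `r = ∇h(y) - ∇h(y*)`. The KKT conditions turn
the iteration into `e⁺ = e - κ(𝐁d + r)`, `d⁺ = d + κ𝐁e⁺`, and expanding squares with `𝐁`
symmetric gives the exact identity
`‖e⁺‖² + ‖d⁺‖² = ‖e‖² + ‖d‖² - 2κ⟪r, e⟫ + κ²‖r‖² - κ²‖𝐁d‖² + κ²‖𝐁e⁺‖²`.
The last term is absorbed by the weight `1 - κ²λ_max²`; strong monotonicity and cocoercivity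
(Baillon–Haddad) of `∇h` bound `-2κ⟪r, e⟫ + κ²‖r‖²` by `-κμ(2 - κL)‖e‖²`; and since `d` is
orthogonal to `ker 𝐁`, `‖𝐁d‖ ≥ λ₊‖d‖`.
-/

section GradientInequalities

variable {E : Type*} [NormedAddCommGroup E] [InnerProductSpace ℝ E] [CompleteSpace E]
  {f : E → ℝ}

open AffineMap in
theorem HasGradientAt.hasDerivAt_comp_lineMap {f' a b : E} {t : ℝ}
    (hf : HasGradientAt f f' (lineMap a b t)) :
    HasDerivAt (fun s : ℝ ↦ f (lineMap a b s)) ⟪f', b - a⟫ t :=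
  hf.hasFDerivAt.comp_hasDerivAt t hasDerivAt_lineMap

theorem HasGradientAt.sub_mul_norm_sq {f' x : E} (hf : HasGradientAt f f' x) (c : ℝ) :
    HasGradientAt (fun y ↦ f y - c / 2 * ‖y‖ ^ 2) (f' - c • x) x := by
  rw [hasGradientAt_iff_hasFDerivAt, map_sub]
  refine hf.hasFDerivAt.sub
    (((hasStrictFDerivAt_norm_sq x).hasFDerivAt.const_mul _).congr_fderiv ?_)
  ext y
  simp only [smul_apply, coe_innerSL_apply, nsmul_eq_mul, Nat.cast_ofNat,
    smul_eq_mul, map_smul, InnerProductSpace.toDual_apply_apply]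
  ring

open AffineMap in
theorem ConvexOn.inner_gradient_le_sub {s : Set E} (hf : ConvexOn ℝ s f) {x z f' : E}
    (hx : x ∈ s) (hz : z ∈ s) (hf' : HasGradientAt f f' x) :
    ⟪f', z - x⟫ ≤ f z - f x := by
  have hderiv : HasDerivAt (fun t : ℝ ↦ f (lineMap x z t)) ⟪f', z - x⟫ 0 :=
    HasGradientAt.hasDerivAt_comp_lineMap (by simpa using hf')
  simpa [slope_def_field] using (hf.comp_affineMap (lineMap x z)).le_slope_of_hasDerivAt
    (by simpa using hx) (by simpa using hz) one_pos hderiv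

theorem StrongConvexOn.mul_norm_sq_le_inner_gradient_sub {s : Set E} {m : ℝ}
    (hf : StrongConvexOn s m f) {x y fx fy : E} (hx : x ∈ s) (hy : y ∈ s)
    (hfx : HasGradientAt f fx x) (hfy : HasGradientAt f fy y) :
    m * ‖x - y‖ ^ 2 ≤ ⟪fx - fy, x - y⟫ := by
  have hconv := strongConvexOn_iff_convex.1 hf
  have hxy := hconv.inner_gradient_le_sub hx hy (hfx.sub_mul_norm_sq m)
  have hyx := hconv.inner_gradient_le_sub hy hx (hfy.sub_mul_norm_sq m)
  have hsum : ⟪fx - m • x, y - x⟫ + ⟪fy - m • y, x - y⟫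
      = m * ‖x - y‖ ^ 2 - ⟪fx - fy, x - y⟫ := by
    calc _ = ⟪(fy - m • y) - (fx - m • x), x - y⟫ := by
          rw [← neg_sub x y, inner_neg_right]; simp only [inner_sub_left]; ring
      _ = ⟪m • (x - y) - (fx - fy), x - y⟫ := by congr 1; module
      _ = _ := by rw [inner_sub_left, real_inner_smul_left, real_inner_self_eq_norm_sq]
  linarith

variable {g : E → E} {L : ℝ}

open AffineMap in
theorem le_add_inner_add_sq_of_lipschitz_gradient (hg : ∀ x, HasGradientAt f (g x) x)
    (hlip : ∀ x y, ‖g x - g y‖ ≤ L * ‖x - y‖) (a b : E) :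
    f b ≤ f a + ⟪g a, b - a⟫ + L / 2 * ‖b - a‖ ^ 2 := by
  set v := b - a
  set χ : ℝ → ℝ := fun t ↦ L / 2 * ‖v‖ ^ 2 * t ^ 2 - f (lineMap a b t)
  have hχ : ∀ t, HasDerivAt χ (L * ‖v‖ ^ 2 * t - ⟪g (lineMap a b t), v⟫) t := fun t ↦ by
    refine (((hasDerivAt_pow 2 t).const_mul (L / 2 * ‖v‖ ^ 2)).sub
      (hg _).hasDerivAt_comp_lineMap).congr_deriv ?_
    norm_num; ring
  -- `χ` is convex because the Lipschitz bound makes its derivative monotone.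
  have hmono : Monotone (deriv χ) := by
    intro s t hst
    simp only [(hχ _).deriv]
    have hdiff : lineMap a b t - lineMap a b s = (t - s) • v := by
      simp only [lineMap_apply_module', v]; module
    have := (real_inner_le_norm (g (lineMap a b t) - g (lineMap a b s)) v).trans
      (mul_le_mul_of_nonneg_right (hlip _ _) (norm_nonneg v))
    rw [hdiff, norm_smul, Real.norm_of_nonneg (sub_nonneg.2 hst), inner_sub_left] at this
    nlinarith
  have hconv := hmono.convexOn_univ_of_deriv fun t ↦ (hχ t).differentiableAt
  have := hconv.le_slope_of_hasDerivAt (Set.mem_univ 0) (Set.mem_univ 1) one_pos (hχ 0)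
  simp only [χ, slope_def_field, lineMap_apply_zero, lineMap_apply_one, sub_zero, div_one,
    zero_sub, mul_zero, one_pow, mul_one, ne_eq, OfNat.ofNat_ne_zero, not_false_eq_true, zero_pow,
    sub_neg_eq_add] at this
  linarith

theorem ConvexOn.inner_gradient_add_norm_sq_le_sub (hf : ConvexOn ℝ Set.univ f)
    (hg : ∀ x, HasGradientAt f (g x) x) (hL : 0 < L)
    (hlip : ∀ x y, ‖g x - g y‖ ≤ L * ‖x - y‖) (p q : E) :
    ⟪g q, p - q⟫ + ‖g p - g q‖ ^ 2 / (2 * L) ≤ f p - f q := by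
  -- Compare `f` at `q` and at the gradient step `z` from `p`.
  set w := g p - g q
  set z := p - L⁻¹ • w
  have hlower := hf.inner_gradient_le_sub (Set.mem_univ q) (Set.mem_univ z) (hg q)
  have hupper := le_add_inner_add_sq_of_lipschitz_gradient hg hlip p z
  have hzq : z - q = (p - q) - L⁻¹ • w := by module
  have hzp : z - p = -(L⁻¹ • w) := by module
  rw [hzq, inner_sub_right, real_inner_smul_right] at hlower
  rw [hzp, inner_neg_right, real_inner_smul_right, norm_neg, norm_smul,
    Real.norm_of_nonneg (inv_nonneg.2 hL.le)] at hupper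
  have hw : L⁻¹ * ⟪g p, w⟫ - L⁻¹ * ⟪g q, w⟫ = L⁻¹ * ‖w‖ ^ 2 := by
    rw [← mul_sub, ← inner_sub_left, real_inner_self_eq_norm_sq]
  have hL' : L / 2 * (L⁻¹ * ‖w‖) ^ 2 = ‖w‖ ^ 2 / (2 * L) := by field_simp
  have hL'' : L⁻¹ * ‖w‖ ^ 2 - ‖w‖ ^ 2 / (2 * L) = ‖w‖ ^ 2 / (2 * L) := by field_simp; ring
  linarith

theorem ConvexOn.norm_gradient_sub_sq_le_mul_inner (hf : ConvexOn ℝ Set.univ f)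
    (hg : ∀ x, HasGradientAt f (g x) x) (hL : 0 < L)
    (hlip : ∀ x y, ‖g x - g y‖ ≤ L * ‖x - y‖) (x y : E) :
    ‖g x - g y‖ ^ 2 ≤ L * ⟪g x - g y, x - y⟫ := by
  have hxy := hf.inner_gradient_add_norm_sq_le_sub hg hL hlip x y
  have hyx := hf.inner_gradient_add_norm_sq_le_sub hg hL hlip y x
  rw [norm_sub_rev] at hyx
  have hsum : ⟪g y, x - y⟫ + ⟪g x, y - x⟫ = -⟪g x - g y, x - y⟫ := by
    rw [← neg_sub x y, inner_neg_right, inner_sub_left]; ring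
  have : ‖g x - g y‖ ^ 2 / L ≤ ⟪g x - g y, x - y⟫ := by
    have : ‖g x - g y‖ ^ 2 / (2 * L) + ‖g x - g y‖ ^ 2 / (2 * L) = ‖g x - g y‖ ^ 2 / L := by
      field_simp; ring
    linarith
  rwa [div_le_iff₀' hL] at this

theorem StrongConvexOn.le_of_lipschitz_gradient [Nontrivial E] {m : ℝ}
    (hf : StrongConvexOn Set.univ m f) (hg : ∀ x, HasGradientAt f (g x) x)
    (hlip : ∀ x y, ‖g x - g y‖ ≤ L * ‖x - y‖) : m ≤ L := by
  obtain ⟨x, hx⟩ := exists_ne (0 : E)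
  have hmono := hf.mul_norm_sq_le_inner_gradient_sub (Set.mem_univ x) (Set.mem_univ 0)
    (hg x) (hg 0)
  have hcs := (real_inner_le_norm (g x - g 0) (x - 0)).trans
    (mul_le_mul_of_nonneg_right (hlip x 0) (norm_nonneg _))
  rw [sub_zero] at hmono hcs
  exact le_of_mul_le_mul_right (by nlinarith) (by positivity : 0 < ‖x‖ ^ 2)

end GradientInequalities

namespace Matrix

variable {n : Type*} [Fintype n] [DecidableEq n] {B : Matrix n n ℝ}

theorem IsHermitian.toEuclideanLin_eigenvectorBasis (hB : B.IsHermitian) (i : n) :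
    toEuclideanLin B (hB.eigenvectorBasis i) = hB.eigenvalues i • hB.eigenvectorBasis i := by
  rw [toLpLin_apply, hB.mulVec_eigenvectorBasis]
  rfl

theorem IsHermitian.norm_toEuclideanLin_sq (hB : B.IsHermitian) (v : EuclideanSpace ℝ n) :
    ‖toEuclideanLin B v‖ ^ 2 = ∑ i, hB.eigenvalues i ^ 2 * ⟪hB.eigenvectorBasis i, v⟫ ^ 2 := by
  rw [← hB.eigenvectorBasis.sum_sq_inner_right]
  refine Finset.sum_congr rfl fun i _ ↦ ?_
  rw [← isSymmetric_toEuclideanLin_iff.2 hB, hB.toEuclideanLin_eigenvectorBasis,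
    real_inner_smul_left, mul_pow]

theorem PosSemidef.norm_toEuclideanLin_sq_le (hB : B.PosSemidef) {M : ℝ}
    (hM : ∀ μ ∈ spectrum ℝ B, μ ≤ M) (v : EuclideanSpace ℝ n) :
    ‖toEuclideanLin B v‖ ^ 2 ≤ M ^ 2 * ‖v‖ ^ 2 := by
  rw [hB.1.norm_toEuclideanLin_sq, ← hB.1.eigenvectorBasis.sum_sq_inner_right, Finset.mul_sum]
  gcongr with i
  · exact hB.eigenvalues_nonneg i
  · exact hM _ (hB.1.eigenvalues_mem_spectrum_real i)

theorem IsHermitian.sq_mul_norm_sq_le_norm_toEuclideanLin_sq (hB : B.IsHermitian) {ℓ : ℝ}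
    (hℓ : 0 ≤ ℓ) (hmin : ∀ μ ∈ spectrum ℝ B, μ ≠ 0 → ℓ ≤ μ) {v : EuclideanSpace ℝ n}
    (hv : ∀ w, toEuclideanLin B w = 0 → ⟪v, w⟫ = 0) :
    ℓ ^ 2 * ‖v‖ ^ 2 ≤ ‖toEuclideanLin B v‖ ^ 2 := by
  rw [hB.norm_toEuclideanLin_sq, ← hB.eigenvectorBasis.sum_sq_inner_right, Finset.mul_sum]
  refine Finset.sum_le_sum fun i _ ↦ ?_
  by_cases hi : hB.eigenvalues i = 0
  · -- Eigenvectors with eigenvalue zero lie in the kernel, hence are orthogonal to `v`.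
    have hker : toEuclideanLin B (hB.eigenvectorBasis i) = 0 := by
      rw [hB.toEuclideanLin_eigenvectorBasis, hi, zero_smul]
    rw [real_inner_comm, hv _ hker]
    simp
  · gcongr
    exact hmin _ (hB.eigenvalues_mem_spectrum_real i) hi

end Matrix

def primalDualRate (κ μ L ℓ : ℝ) : ℝ :=
  max (1 - κ * μ * (1 - κ * L)) (1 - κ ^ 2 * ℓ ^ 2)

theorem primalDualRate_nonneg {κ μ L ℓ : ℝ} (hκ : 0 ≤ κ) (hμ : 0 ≤ μ) (hμL : μ ≤ L)
    (hκL : κ * L < 1) : 0 ≤ primalDualRate κ μ L ℓ := by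
  have hκμ : 0 ≤ κ * μ := mul_nonneg hκ hμ
  refine le_max_of_le_left ?_
  nlinarith [mul_le_mul_of_nonneg_left hμL hκ, mul_nonneg hκμ (mul_nonneg hκ (hμ.trans hμL))]

theorem primalDualRate_lt_one {κ μ L ℓ : ℝ} (hκ : 0 < κ) (hμ : 0 < μ) (hκL : κ * L < 1)
    (hℓ : 0 < ℓ) : primalDualRate κ μ L ℓ < 1 := by
  refine max_lt ?_ ?_
  · nlinarith [mul_pos (mul_pos hκ hμ) (sub_pos.2 hκL)]
  · nlinarith [pow_pos (mul_pos hκ hℓ) 2]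

namespace LinearMap.IsSymmetric

variable {E : Type*} [NormedAddCommGroup E] [InnerProductSpace ℝ E] {T : E →ₗ[ℝ] E}

theorem norm_sq_add_norm_sq_primalDual_step (hT : T.IsSymmetric) (κ : ℝ) (e d r : E) :
    ‖e - κ • (T d + r)‖ ^ 2 + ‖d + κ • T (e - κ • (T d + r))‖ ^ 2
      = ‖e‖ ^ 2 + ‖d‖ ^ 2 - 2 * κ * ⟪r, e⟫ + κ ^ 2 * ‖r‖ ^ 2 - κ ^ 2 * ‖T d‖ ^ 2
        + κ ^ 2 * ‖T (e - κ • (T d + r))‖ ^ 2 := by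
  set e' := e - κ • (T d + r)
  have hcross : ⟪d, T e'⟫ = ⟪T d, e⟫ - κ * (‖T d‖ ^ 2 + ⟪T d, r⟫) := by
    rw [← hT, inner_sub_right, real_inner_smul_right, inner_add_right,
      real_inner_self_eq_norm_sq]
  rw [norm_add_sq_real, real_inner_smul_right, hcross, norm_sub_sq_real, real_inner_smul_right,
    norm_smul, norm_smul, mul_pow, mul_pow, norm_add_sq_real, inner_add_right,
    real_inner_comm e (T d), real_inner_comm e r, Real.norm_eq_abs, sq_abs]
  ring


theorem primalDual_step_le (hT : T.IsSymmetric) {κ μ L M ℓ : ℝ}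
    (hκ : 0 < κ) (hμL : μ ≤ L) (hκL : κ * L < 1) (hκM : κ * M ^ 2 < μ)
    (hM : ∀ w, ‖T w‖ ^ 2 ≤ M ^ 2 * ‖w‖ ^ 2) {e d r : E} (hℓ : ℓ ^ 2 * ‖d‖ ^ 2 ≤ ‖T d‖ ^ 2)
    (hmono : μ * ‖e‖ ^ 2 ≤ ⟪r, e⟫) (hcoco : ‖r‖ ^ 2 ≤ L * ⟪r, e⟫) :
    (1 - κ ^ 2 * M ^ 2) * ‖e - κ • (T d + r)‖ ^ 2 + ‖d + κ • T (e - κ • (T d + r))‖ ^ 2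
      ≤ primalDualRate κ μ L ℓ * ((1 - κ ^ 2 * M ^ 2) * ‖e‖ ^ 2 + ‖d‖ ^ 2) := by
  have hid := hT.norm_sq_add_norm_sq_primalDual_step κ e d r
  set e' := e - κ • (T d + r)
  have hκ2 : 0 ≤ κ ^ 2 := sq_nonneg κ
  have hM' := mul_le_mul_of_nonneg_left (hM e') hκ2
  have hℓ' := mul_le_mul_of_nonneg_left hℓ hκ2
  have hcoco' := mul_le_mul_of_nonneg_left hcoco hκ2
  have hmono' := mul_le_mul_of_nonneg_left hmono (by nlinarith : 0 ≤ 2 * κ - κ ^ 2 * L)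
  have hμ : 0 ≤ μ := (mul_nonneg hκ.le (sq_nonneg M)).trans hκM.le
  have hκμ : κ * μ ≤ 1 := by nlinarith [mul_le_mul_of_nonneg_left hμL hκ.le]
  have hMle : κ ^ 2 * M ^ 2 ≤ κ * μ := by nlinarith
  set γ := primalDualRate κ μ L ℓ
  have hγe : 1 - κ * μ * (1 - κ * L) ≤ γ := le_max_left _ _
  have hγd : 1 - κ ^ 2 * ℓ ^ 2 ≤ γ := le_max_right _ _
  have hγe_le : 1 - κ * μ * (1 - κ * L) ≤ 1 := by
    nlinarith [mul_nonneg (mul_nonneg hκ.le hμ) (sub_nonneg.2 hκL.le)]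
  have hprimal : 1 - κ * μ * (2 - κ * L) ≤ γ * (1 - κ ^ 2 * M ^ 2) := by
    nlinarith [mul_le_mul_of_nonneg_right hγe (by linarith : 0 ≤ 1 - κ ^ 2 * M ^ 2),
      mul_le_mul_of_nonneg_left hγe_le (by positivity : 0 ≤ κ ^ 2 * M ^ 2)]
  calc (1 - κ ^ 2 * M ^ 2) * ‖e'‖ ^ 2 + ‖d + κ • T e'‖ ^ 2
      ≤ (1 - κ * μ * (2 - κ * L)) * ‖e‖ ^ 2 + (1 - κ ^ 2 * ℓ ^ 2) * ‖d‖ ^ 2 := by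
        linarith
    _ ≤ γ * (1 - κ ^ 2 * M ^ 2) * ‖e‖ ^ 2 + γ * ‖d‖ ^ 2 := by gcongr
    _ = γ * ((1 - κ ^ 2 * M ^ 2) * ‖e‖ ^ 2 + ‖d‖ ^ 2) := by ring

end LinearMap.IsSymmetric

theorem primal_dual_one_step_contraction_general (N : ℕ) (μ L : ℝ) (hμ : 0 < μ) (hL : 0 < L)
    (h : EuclideanSpace ℝ (Fin N) → ℝ)
    (hsc : StrongConvexOn Set.univ μ h)
    (gh : EuclideanSpace ℝ (Fin N) → EuclideanSpace ℝ (Fin N))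
    (hgrad : ∀ x, HasGradientAt h (gh x) x)
    (hlip : ∀ x y, ‖gh x - gh y‖ ≤ L * ‖x - y‖)
    (B : Matrix (Fin N) (Fin N) ℝ) (hBpsd : B.PosSemidef)
    (lamMax lamPos : ℝ)
    (hmaxmem : lamMax ∈ spectrum ℝ B)
    (hmax : ∀ μ' ∈ spectrum ℝ B, μ' ≤ lamMax) (hmaxpos : 0 < lamMax)
    (hpospos : 0 < lamPos)
    (hposmin : ∀ μ' ∈ spectrum ℝ B, μ' ≠ 0 → lamPos ≤ μ')
    (ystar lstar : EuclideanSpace ℝ (Fin N))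
    (hkkt1 : gh ystar + Matrix.toEuclideanLin B lstar = 0)
    (hkkt2 : Matrix.toEuclideanLin B ystar = 0)
    (κ : ℝ) (hκ0 : 0 < κ) (hκL : κ < 1 / L) (hκmax : κ < μ / lamMax ^ 2)
    (y lam : EuclideanSpace ℝ (Fin N))
    (horth : ∀ w : EuclideanSpace ℝ (Fin N),
      Matrix.toEuclideanLin B w = 0 → ⟪lam - lstar, w⟫ = 0)
    (yplus lplus : EuclideanSpace ℝ (Fin N))
    (hyplus : yplus = y - κ • (Matrix.toEuclideanLin B lam + gh y))
    (hlplus : lplus = lam + κ • Matrix.toEuclideanLin B yplus)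
    (γ₀ : ℝ) (hγ₀ : γ₀ = max (1 - κ * μ * (1 - κ * L)) (1 - κ ^ 2 * lamPos ^ 2)) :
    (0 ≤ γ₀ ∧ γ₀ < 1) ∧
    (1 - κ ^ 2 * lamMax ^ 2) * ‖yplus - ystar‖ ^ 2 + ‖lplus - lstar‖ ^ 2 ≤
      γ₀ * ((1 - κ ^ 2 * lamMax ^ 2) * ‖y - ystar‖ ^ 2 + ‖lam - lstar‖ ^ 2) := by
  have : Nonempty (Fin N) := by
    by_contra hN
    rw [not_nonempty_iff] at hN
    simp [spectrum.of_subsingleton] at hmaxmem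
  have hμL : μ ≤ L := hsc.le_of_lipschitz_gradient hgrad hlip
  have hκL' : κ * L < 1 := by rwa [lt_div_iff₀ hL] at hκL
  have hκmax' : κ * lamMax ^ 2 < μ := by rwa [lt_div_iff₀ (by positivity)] at hκmax
  set T := Matrix.toEuclideanLin B
  have hstep : yplus - ystar = (y - ystar) - κ • (T (lam - lstar) + (gh y - gh ystar)) := by
    rw [hyplus, map_sub, eq_neg_of_add_eq_zero_right hkkt1]
    module
  have hdual : lplus - lstar = (lam - lstar) + κ • T (yplus - ystar) := by
    rw [hlplus, map_sub, hkkt2, sub_zero]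
    abel
  rw [show γ₀ = primalDualRate κ μ L lamPos from hγ₀, hdual, hstep]
  refine ⟨⟨primalDualRate_nonneg hκ0.le hμ.le hμL hκL',
    primalDualRate_lt_one hκ0 hμ hκL' hpospos⟩, ?_⟩
  exact (Matrix.isSymmetric_toEuclideanLin_iff.2 hBpsd.1).primalDual_step_le hκ0 hμL hκL' hκmax'
    (hBpsd.norm_toEuclideanLin_sq_le hmax)
    (hBpsd.1.sq_mul_norm_sq_le_norm_toEuclideanLin_sq hpospos.le hposmin horth)
    (hsc.mul_norm_sq_le_inner_gradient_sub (Set.mem_univ _) (Set.mem_univ _) (hgrad y)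
      (hgrad ystar))
    ((hsc.convexOn fun _ ↦ by positivity).norm_gradient_sub_sq_le_mul_inner hgrad hL hlip y ystar)

/-- one-step contraction of the fixed-step primal–dual iteration.
`h` is `μ`-strongly convex with `L`-Lipschitz gradient `gh`; `𝐁` is a symmetric PSD
matrix with largest eigenvalue `λ_max > 0` and smallest nonzero eigenvalue `λ₊ > 0`;
`(y*, λ*)` is a KKT pair (`∇h(y*) + 𝐁λ* = 0`, `𝐁y* = 0`);
`0 < κ < min(1/L, μ/λ_max²)`; and `λ − λ*` is orthogonal to the kernel of `𝐁`.
With `y⁺ = y − κ(𝐁λ + ∇h(y))` and `λ⁺ = λ + κ𝐁y⁺`,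
`(1 − κ²λ_max²)‖y⁺ − y*‖² + ‖λ⁺ − λ*‖² ≤ γ₀[(1 − κ²λ_max²)‖y − y*‖² + ‖λ − λ*‖²]`,
where `γ₀ = max(1 − κμ(1 − κL), 1 − κ²λ₊²) ∈ [0,1)`. -/
theorem primal_dual_one_step_contraction (N : ℕ) (μ L : ℝ) (hμ : 0 < μ) (hL : 0 < L)
    (h : EuclideanSpace ℝ (Fin N) → ℝ) (hdiff : Differentiable ℝ h)
    (hsc : StrongConvexOn Set.univ μ h)
    (gh : EuclideanSpace ℝ (Fin N) → EuclideanSpace ℝ (Fin N))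
    (hgrad : ∀ x, HasGradientAt h (gh x) x)
    (hlip : ∀ x y, ‖gh x - gh y‖ ≤ L * ‖x - y‖)
    (B : Matrix (Fin N) (Fin N) ℝ) (hBsym : B.IsSymm) (hBpsd : B.PosSemidef)
    (lamMax lamPos : ℝ)
    (hmaxmem : lamMax ∈ spectrum ℝ B)
    (hmax : ∀ μ' ∈ spectrum ℝ B, μ' ≤ lamMax) (hmaxpos : 0 < lamMax)
    (hposmem : lamPos ∈ spectrum ℝ B) (hpospos : 0 < lamPos)
    (hposmin : ∀ μ' ∈ spectrum ℝ B, μ' ≠ 0 → lamPos ≤ μ')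
    (ystar lstar : EuclideanSpace ℝ (Fin N))
    (hkkt1 : gh ystar + Matrix.toEuclideanLin B lstar = 0)
    (hkkt2 : Matrix.toEuclideanLin B ystar = 0)
    (κ : ℝ) (hκ0 : 0 < κ) (hκL : κ < 1 / L) (hκmax : κ < μ / lamMax ^ 2)
    (y lam : EuclideanSpace ℝ (Fin N))
    (horth : ∀ w : EuclideanSpace ℝ (Fin N),
      Matrix.toEuclideanLin B w = 0 → ⟪lam - lstar, w⟫ = 0)
    (yplus lplus : EuclideanSpace ℝ (Fin N))
    (hyplus : yplus = y - κ • (Matrix.toEuclideanLin B lam + gh y))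
    (hlplus : lplus = lam + κ • Matrix.toEuclideanLin B yplus)
    (γ₀ : ℝ) (hγ₀ : γ₀ = max (1 - κ * μ * (1 - κ * L)) (1 - κ ^ 2 * lamPos ^ 2)) :
    (0 ≤ γ₀ ∧ γ₀ < 1) ∧
    (1 - κ ^ 2 * lamMax ^ 2) * ‖yplus - ystar‖ ^ 2 + ‖lplus - lstar‖ ^ 2 ≤
      γ₀ * ((1 - κ ^ 2 * lamMax ^ 2) * ‖y - ystar‖ ^ 2 + ‖lam - lstar‖ ^ 2) :=
  primal_dual_one_step_contraction_general N μ L hμ hL h hsc gh hgrad hlip B hBpsd lamMax lamPos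
    hmaxmem hmax hmaxpos hpospos hposmin ystar lstar hkkt1 hkkt2 κ hκ0 hκL hκmax y lam horth yplus
    lplus hyplus hlplus γ₀ hγ₀
end

section
/- Let A be an n×n symmetric doubly stochastic matrix satisfying |[Aᵗ]_{ij} − 1/n| ≤ √n ρᵗ for all i, j and t ≥ 0, for some ρ ∈ (0,1). Let matrices v_{i,t} ∈ ℝ^{m₂×m₂} evolve as v_{i,t+1} = Σ_{j=1}^n a_{ij} v_{j,t} + d_{i,t+1} with given perturbations d_{i,t}, and set v̄_t = (1/n)Σ_{i=1}^n v_{i,t} and d̄_t = (1/n)Σ_{i=1}^n d_{i,t}. Then (i) v̄_t = v̄_0 + Σ_{k=1}^t d̄_k for all t; and (ii) for every i and t, ‖v_{i,t} − v̄_t‖_F ≤ √n ρᵗ Σ_{j=1}^n ‖v_{j,0}‖_F + Σ_{k=1}^t √n ρ^{t−k} Σ_{j=1}^n ‖d_{j,k}‖_F. -/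
/-- The Frobenius norm of a square real matrix. -/
noncomputable def frobeniusNorm' {m : ℕ} (M : Matrix (Fin m) (Fin m) ℝ) : ℝ :=
  Real.sqrt (∑ i, ∑ j, (M i j) ^ 2)

attribute [local instance] Matrix.frobeniusSeminormedAddCommGroup
  Matrix.frobeniusNormedAddCommGroup Matrix.frobeniusNormedSpace

lemma frobeniusNorm'_eq {m : ℕ} (M : Matrix (Fin m) (Fin m) ℝ) :
    frobeniusNorm' M = ‖M‖ := by
  rw [Matrix.frobenius_norm_def, frobeniusNorm', Real.sqrt_eq_rpow]
  congr 1
  simp_rw [Real.norm_eq_abs, show (2:ℝ) = ((2:ℕ):ℝ) by norm_num, Real.rpow_natCast, sq_abs]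

/-- dynamic average tracking estimate.  If `A` is an `n×n` symmetric
doubly stochastic matrix with the geometric mixing bound `|[Aᵗ]_{ij} − 1/n| ≤ √n ρᵗ`
(for some `ρ ∈ (0,1)`), and the matrices `v_{i,t}` evolve as
`v_{i,t+1} = Σ_j a_{ij} v_{j,t} + d_{i,t+1}`, then
(i) the average `v̄_t = (1/n)Σ_i v_{i,t}` satisfies `v̄_t = v̄_0 + Σ_{k=1}^t d̄_k`, and
(ii) for every `i, t`,
`‖v_{i,t} − v̄_t‖_F ≤ √n ρᵗ Σ_j ‖v_{j,0}‖_F + Σ_{k=1}^t √n ρ^{t−k} Σ_j ‖d_{j,k}‖_F`. -/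
theorem average_tracking_estimate (n m₂ : ℕ) (hn : 0 < n)
    (A : Matrix (Fin n) (Fin n) ℝ) (hsym : A.IsSymm)
    (hnonneg : ∀ i j, 0 ≤ A i j)
    (hrow : ∀ i, ∑ j, A i j = 1) (hcol : ∀ j, ∑ i, A i j = 1)
    (ρ : ℝ) (hρ0 : 0 < ρ) (hρ1 : ρ < 1)
    (hmix : ∀ (t : ℕ) (i j : Fin n), |(A ^ t) i j - 1 / (n : ℝ)| ≤ Real.sqrt n * ρ ^ t)
    (v d : ℕ → Fin n → Matrix (Fin m₂) (Fin m₂) ℝ)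
    (hrec : ∀ t i, v (t + 1) i = (∑ j, A i j • v t j) + d (t + 1) i) :
    (∀ t : ℕ, (n : ℝ)⁻¹ • ∑ i, v t i =
        (n : ℝ)⁻¹ • (∑ i, v 0 i) + ∑ k ∈ Finset.Icc 1 t, (n : ℝ)⁻¹ • ∑ i, d k i) ∧
    (∀ (t : ℕ) (i : Fin n),
      frobeniusNorm' (v t i - (n : ℝ)⁻¹ • ∑ j, v t j) ≤
        Real.sqrt n * ρ ^ t * ∑ j, frobeniusNorm' (v 0 j)
          + ∑ k ∈ Finset.Icc 1 t, Real.sqrt n * ρ ^ (t - k) * ∑ j, frobeniusNorm' (d k j)) := by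
  -- average of v
  have part1 : ∀ t : ℕ, ∑ i, v t i = ∑ i, v 0 i + ∑ k ∈ Finset.Icc 1 t, ∑ i, d k i := by
    intro t
    induction t with
    | zero => simp
    | succ t ih =>
      have hstep : ∑ i, v (t + 1) i = ∑ j, v t j + ∑ i, d (t + 1) i := by
        simp_rw [hrec]
        rw [Finset.sum_add_distrib]
        congr 1
        rw [Finset.sum_comm]
        simp_rw [← Finset.sum_smul, hcol, one_smul]
      rw [hstep, ih, Finset.sum_Icc_succ_top (by omega : 1 ≤ t + 1), ← add_assoc]
  -- explicit formula for v t i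
  have key : ∀ (t : ℕ) (i : Fin n), v t i =
      ∑ j, (A ^ t) i j • v 0 j
        + ∑ k ∈ Finset.Icc 1 t, ∑ j, (A ^ (t - k)) i j • d k j := by
    intro t
    induction t with
    | zero =>
      intro i
      simp [Matrix.one_apply, Finset.sum_ite_eq]
    | succ t ih =>
      intro i
      rw [hrec]
      have h1 : ∑ j, A i j • v t j =
          ∑ j, (A ^ (t + 1)) i j • v 0 j
            + ∑ k ∈ Finset.Icc 1 t, ∑ j, (A ^ (t + 1 - k)) i j • d k j := by
        simp_rw [ih, smul_add, Finset.smul_sum, Finset.sum_add_distrib, smul_smul]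
        congr 1
        · rw [Finset.sum_comm]
          refine Finset.sum_congr rfl fun l _ => ?_
          rw [← Finset.sum_smul, pow_succ', Matrix.mul_apply]
        · rw [Finset.sum_comm]
          refine Finset.sum_congr rfl fun k hk => ?_
          rw [Finset.sum_comm]
          refine Finset.sum_congr rfl fun l _ => ?_
          rw [← Finset.sum_smul]
          congr 1
          have hk' : k ≤ t := (Finset.mem_Icc.mp hk).2
          have : t + 1 - k = (t - k) + 1 := by omega
          rw [this, pow_succ', Matrix.mul_apply]
      rw [h1, Finset.sum_Icc_succ_top (by omega : 1 ≤ t + 1)]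
      have h2 : d (t + 1) i = ∑ j, (A ^ (t + 1 - (t + 1))) i j • d (t + 1) j := by
        simp [Matrix.one_apply, Finset.sum_ite_eq]
      rw [h2]
      abel
  constructor
  · intro t
    rw [part1 t, smul_add]
    congr 1
    rw [Finset.smul_sum]
  · intro t i
    have hnpos : (0 : ℝ) < (n : ℝ) := by exact_mod_cast hn
    have diff : v t i - (n : ℝ)⁻¹ • ∑ j, v t j =
        (∑ j, ((A ^ t) i j - 1 / (n : ℝ)) • v 0 j)
          + ∑ k ∈ Finset.Icc 1 t, ∑ j, ((A ^ (t - k)) i j - 1 / (n : ℝ)) • d k j := by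
      rw [key t i, part1 t, smul_add, Finset.smul_sum]
      simp_rw [sub_smul, Finset.sum_sub_distrib, one_div, Finset.smul_sum]
      abel
    rw [frobeniusNorm'_eq, diff]
    have hb1 : ‖∑ j, ((A ^ t) i j - 1 / (n : ℝ)) • v 0 j‖ ≤
        Real.sqrt n * ρ ^ t * ∑ j, frobeniusNorm' (v 0 j) := by
      calc ‖∑ j, ((A ^ t) i j - 1 / (n : ℝ)) • v 0 j‖
          ≤ ∑ j, ‖((A ^ t) i j - 1 / (n : ℝ)) • v 0 j‖ := norm_sum_le _ _
        _ ≤ ∑ j, Real.sqrt n * ρ ^ t * ‖v 0 j‖ := by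
            refine Finset.sum_le_sum fun j _ => ?_
            rw [norm_smul, Real.norm_eq_abs]
            exact mul_le_mul_of_nonneg_right (hmix t i j) (norm_nonneg _)
        _ = Real.sqrt n * ρ ^ t * ∑ j, frobeniusNorm' (v 0 j) := by
            rw [← Finset.mul_sum]; simp_rw [frobeniusNorm'_eq]
    have hb2 : ‖∑ k ∈ Finset.Icc 1 t, ∑ j, ((A ^ (t - k)) i j - 1 / (n : ℝ)) • d k j‖ ≤
        ∑ k ∈ Finset.Icc 1 t, Real.sqrt n * ρ ^ (t - k) * ∑ j, frobeniusNorm' (d k j) := by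
      calc ‖∑ k ∈ Finset.Icc 1 t, ∑ j, ((A ^ (t - k)) i j - 1 / (n : ℝ)) • d k j‖
          ≤ ∑ k ∈ Finset.Icc 1 t, ‖∑ j, ((A ^ (t - k)) i j - 1 / (n : ℝ)) • d k j‖ :=
            norm_sum_le _ _
        _ ≤ ∑ k ∈ Finset.Icc 1 t, Real.sqrt n * ρ ^ (t - k) * ∑ j, frobeniusNorm' (d k j) := by
            refine Finset.sum_le_sum fun k _ => ?_
            calc ‖∑ j, ((A ^ (t - k)) i j - 1 / (n : ℝ)) • d k j‖
                ≤ ∑ j, ‖((A ^ (t - k)) i j - 1 / (n : ℝ)) • d k j‖ := norm_sum_le _ _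
              _ ≤ ∑ j, Real.sqrt n * ρ ^ (t - k) * ‖d k j‖ := by
                  refine Finset.sum_le_sum fun j _ => ?_
                  rw [norm_smul, Real.norm_eq_abs]
                  exact mul_le_mul_of_nonneg_right (hmix (t - k) i j) (norm_nonneg _)
              _ = Real.sqrt n * ρ ^ (t - k) * ∑ j, frobeniusNorm' (d k j) := by
                  rw [← Finset.mul_sum]; simp_rw [frobeniusNorm'_eq]
    calc ‖_ + _‖ ≤ _ + _ := norm_add_le _ _
      _ ≤ _ := add_le_add hb1 hb2
end

section
/- Let G: ℝ^m → ℝ be twice continuously differentiable and μ-strongly convex, and let J: ℝ^m → ℝ be twice continuously differentiable and convex. For s ≥ 0 define y(s) = argmin_{y∈ℝ^m} (sJ(y) + G(y)) (unique by strong convexity). Then s ↦ y(s) is differentiable with dy(s)/ds = −(∇²G(y(s)) + s∇²J(y(s)))^{−1} ∇J(y(s)) for all s ≥ 0; in particular dy(0)/ds = −(∇²G(y(0)))^{−1} ∇J(y(0)). -/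
/-!
Strong convexity of `s J + G` makes its gradient `s ∇J + ∇G` a `μ`-strongly monotone operator,
whose unique zero is `y s`. Strong monotonicity gives the Lipschitz bound
`‖y s - y s₀‖ ≤ ‖∇J (y s₀)‖ / μ * |s - s₀|` and makes the Jacobian `H = ∇²G + s₀ ∇²J` coercive,
hence invertible by Lax–Milgram. Linearising `s ∇J (y s) + ∇G (y s) = 0` at `s₀` along this
Lipschitz path gives `H (y s - y s₀) + (s - s₀) ∇J (y s₀) = o(s - s₀)`, so no implicit function
theorem is needed.
-/

open Set Filter Topology Asymptotics InnerProductSpace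

theorem HasFDerivAt.exists_hasDerivWithinAt_of_apply_eq_zero {E F : Type*}
    [NormedAddCommGroup E] [NormedSpace ℝ E] [NormedAddCommGroup F] [NormedSpace ℝ F]
    {f : ℝ × E → F} {L : ℝ × E →L[ℝ] F} {y : ℝ → E} {t : Set ℝ} {s₀ : ℝ}
    (hf : HasFDerivAt f L (s₀, y s₀)) (e : E ≃L[ℝ] F) (he : ∀ v, L (0, v) = e v)
    (hzero : ∀ s ∈ t, f (s, y s) = 0) (hs₀ : s₀ ∈ t)
    (hy : (fun s => y s - y s₀) =O[𝓝[t] s₀] fun s => s - s₀) :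
    ∃ d, HasDerivWithinAt y d t s₀ ∧ L (1, d) = 0 := by
  have hL : ∀ a v, L (a, v) = a • L (1, 0) + e v := fun a v => by
    rw [← he, ← L.map_smul, ← L.map_add, Prod.smul_mk, smul_zero, Prod.mk_add_mk, smul_eq_mul,
      mul_one, add_zero, zero_add]
  set d := -e.symm (L (1, 0))
  refine ⟨d, ?_, by rw [hL, one_smul, map_neg, e.apply_symm_apply, add_neg_cancel]⟩
  have hcurve : (fun s => (s, y s) - (s₀, y s₀)) =O[𝓝[t] s₀] fun s => s - s₀ :=
    (isBigO_refl _ _).prod_left hy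
  have htend : Tendsto (fun s => (s, y s)) (𝓝[t] s₀) (𝓝 (s₀, y s₀)) := by
    rw [← tendsto_sub_nhds_zero_iff]
    exact hcurve.trans_tendsto
      (tendsto_sub_nhds_zero_iff.mpr (tendsto_id.mono_left nhdsWithin_le_nhds))
  have hlin := (hf.isLittleO.comp_tendsto htend).trans_isBigO hcurve
  refine .of_isLittleO <| ((e.symm : F →L[ℝ] E).isBigO_comp _ _).trans_isLittleO hlin.neg_left
    |>.congr' ?_ EventuallyEq.rfl
  filter_upwards [self_mem_nhdsWithin] with s hs
  rw [Function.comp_apply, hzero s hs, hzero s₀ hs₀, Prod.mk_sub_mk, hL]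
  simp only [sub_self, zero_sub, neg_neg, map_add, map_smul, ContinuousLinearEquiv.coe_coe,
    e.symm_apply_apply, d]
  module

theorem ConvexOn.fderiv_apply_sub_le_fderiv_apply_sub {E : Type*} [NormedAddCommGroup E]
    [NormedSpace ℝ E] {f : E → ℝ} (hf : ConvexOn ℝ univ f) (hd : Differentiable ℝ f) (a b : E) :
    fderiv ℝ f b (a - b) ≤ fderiv ℝ f a (a - b) := by
  have hline : ConvexOn ℝ univ (f ∘ AffineMap.lineMap (k := ℝ) b a) := by
    simpa using hf.comp_affineMap (AffineMap.lineMap b a)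
  have hderiv (r : ℝ) : HasDerivAt (f ∘ AffineMap.lineMap (k := ℝ) b a)
      (fderiv ℝ f (AffineMap.lineMap b a r) (a - b)) r :=
    (hd _).hasFDerivAt.comp_hasDerivAt r AffineMap.hasDerivAt_lineMap
  have h0 := hderiv 0
  have h1 := hderiv 1
  rw [AffineMap.lineMap_apply_zero] at h0
  rw [AffineMap.lineMap_apply_one] at h1
  exact (hline.le_slope_of_hasDerivAt trivial trivial one_pos h0).trans
    (hline.slope_le_of_hasDerivAt trivial trivial one_pos h1)

section InnerProductSpace

variable {E : Type*} [NormedAddCommGroup E] [InnerProductSpace ℝ E]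

def StronglyMonotoneWith (m : ℝ) (T : E → E) : Prop :=
  ∀ a b, m * ‖a - b‖ ^ 2 ≤ ⟪T a - T b, a - b⟫_ℝ

namespace StronglyMonotoneWith

variable {m : ℝ} {T : E → E}

theorem mul_norm_sub_le (hT : StronglyMonotoneWith m T) (a b : E) :
    m * ‖a - b‖ ≤ ‖T a - T b‖ := by
  rcases (norm_nonneg (a - b)).eq_or_lt with h | h
  · rw [← h, mul_zero]
    exact norm_nonneg _
  · refine le_of_mul_le_mul_right ?_ h
    calc m * ‖a - b‖ * ‖a - b‖ = m * ‖a - b‖ ^ 2 := by ring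
      _ ≤ ⟪T a - T b, a - b⟫_ℝ := hT a b
      _ ≤ ‖T a - T b‖ * ‖a - b‖ := real_inner_le_norm _ _

theorem mul_norm_sq_le_inner_apply (hT : StronglyMonotoneWith m T) {D : E →L[ℝ] E} {x : E}
    (hD : HasFDerivAt T D x) (v : E) : m * ‖v‖ ^ 2 ≤ ⟪D v, v⟫_ℝ := by
  set g : ℝ → ℝ := fun r => ⟪T (x + r • v), v⟫_ℝ - m * r * ‖v‖ ^ 2
  have hmono : Monotone g := by
    intro r r' hrr'
    have key := hT (x + r' • v) (x + r • v)
    rw [add_sub_add_left_eq_sub, ← sub_smul, norm_smul, real_inner_smul_right, inner_sub_left,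
      Real.norm_eq_abs, mul_pow, sq_abs] at key
    rcases hrr'.eq_or_lt with rfl | hlt
    · exact le_rfl
    · have hstep : (r' - r) * (m * (r' - r) * ‖v‖ ^ 2)
          ≤ (r' - r) * (⟪T (x + r' • v), v⟫_ℝ - ⟪T (x + r • v), v⟫_ℝ) := by linarith
      have := le_of_mul_le_mul_left hstep (sub_pos.mpr hlt)
      simp only [g]
      linarith
  have hline : HasDerivAt (fun r : ℝ => x + r • v) v 0 := by
    simpa using ((hasDerivAt_id (0 : ℝ)).smul_const v).const_add x
  have hcomp : HasDerivAt (fun r : ℝ => T (x + r • v)) (D v) 0 :=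
    hD.comp_hasDerivAt_of_eq 0 hline (by simp)
  have hg : HasDerivAt g (⟪D v, v⟫_ℝ - m * ‖v‖ ^ 2) 0 := by
    have := (hcomp.inner ℝ (hasDerivAt_const 0 v)).fun_sub
      (((hasDerivAt_id' (0 : ℝ)).const_mul m).mul_const (‖v‖ ^ 2))
    rwa [inner_zero_right, zero_add, mul_one] at this
  have := hg.deriv ▸ hmono.deriv_nonneg (x := 0)
  linarith

theorem norm_sub_le_of_smul_add_eq_zero {g h : E → E} {s s₀ : ℝ} {a b : E}
    (hT : StronglyMonotoneWith m fun x => s • g x + h x) (hm : 0 < m)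
    (ha : s • g a + h a = 0) (hb : s₀ • g b + h b = 0) : ‖a - b‖ ≤ ‖g b‖ / m * |s - s₀| := by
  rw [div_mul_eq_mul_div, le_div_iff₀ hm, mul_comm]
  calc m * ‖a - b‖ ≤ ‖(s • g a + h a) - (s • g b + h b)‖ := hT.mul_norm_sub_le a b
    _ = ‖(s - s₀) • g b‖ := by
      rw [ha, zero_sub, norm_neg]
      congr 1
      linear_combination (norm := module) hb
    _ = ‖g b‖ * |s - s₀| := by rw [norm_smul, Real.norm_eq_abs, mul_comm]

end StronglyMonotoneWith

theorem StrongConvexOn.const_mul_add {S : Set E} {m s : ℝ} {J G : E → ℝ}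
    (hG : StrongConvexOn S m G) (hJ : ConvexOn ℝ S J) (hs : 0 ≤ s) :
    StrongConvexOn S m (fun z => s * J z + G z) := by
  have := (strongConvexOn_zero.mpr (hJ.smul hs)).add hG
  simpa [StrongConvexOn, Pi.add_def] using this

variable [CompleteSpace E]

theorem exists_continuousLinearEquiv_of_coercive {m : ℝ} (hm : 0 < m)
    (H : E →L[ℝ] E) (hH : ∀ v, m * ‖v‖ ^ 2 ≤ ⟪H v, v⟫_ℝ) : ∃ e : E ≃L[ℝ] E, ∀ v, e v = H v := by
  have hcoer : IsCoercive ((innerSL ℝ).comp H) :=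
    ⟨m, hm, fun v => by simpa [sq, mul_assoc] using hH v⟩
  exact ⟨hcoer.continuousLinearEquivOfBilin, fun v => ext_inner_right ℝ fun w => by simp⟩

theorem exists_hasDerivWithinAt_of_smul_add_eq_zero {g h : E → E} {Dg Dh : E →L[ℝ] E}
    {y : ℝ → E} {t : Set ℝ} {m s₀ : ℝ} (hm : 0 < m) (hs₀ : s₀ ∈ t)
    (hmono : ∀ s ∈ t, StronglyMonotoneWith m fun x => s • g x + h x)
    (hzero : ∀ s ∈ t, s • g (y s) + h (y s) = 0)
    (hg : HasFDerivAt g Dg (y s₀)) (hh : HasFDerivAt h Dh (y s₀)) :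
    ∃ d, HasDerivWithinAt y d t s₀ ∧ (Dh + s₀ • Dg) d = -g (y s₀) := by
  have hlip : (fun s => y s - y s₀) =O[𝓝[t] s₀] fun s => s - s₀ :=
    .of_bound _ <| eventually_nhdsWithin_of_forall fun s hs =>
      (hmono s hs).norm_sub_le_of_smul_add_eq_zero hm (hzero s hs) (hzero s₀ hs₀)
  obtain ⟨e, he⟩ := exists_continuousLinearEquiv_of_coercive hm _
    ((hmono s₀ hs₀).mul_norm_sq_le_inner_apply ((hg.const_smul s₀).add hh))
  have hsnd := hasFDerivAt_snd (𝕜 := ℝ) (p := (s₀, y s₀))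
  have hpath := (hasFDerivAt_fst.smul (hg.comp (s₀, y s₀) hsnd)).add (hh.comp (s₀, y s₀) hsnd)
  obtain ⟨d, hd, hLd⟩ := hpath.exists_hasDerivWithinAt_of_apply_eq_zero e
    (fun v => by simp [he]) hzero hs₀ hlip
  refine ⟨d, hd, ?_⟩
  simp only [add_apply, smul_apply, ContinuousLinearMap.comp_apply, ContinuousLinearMap.coe_snd',
    ContinuousLinearMap.smulRight_apply, ContinuousLinearMap.coe_fst', Function.comp_apply,
    one_smul] at hLd
  simp only [add_apply, smul_apply]
  linear_combination (norm := module) hLd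

theorem hasGradientAt_const_mul_add {J G : E → ℝ} {x : E} (hJ : DifferentiableAt ℝ J x)
    (hG : DifferentiableAt ℝ G x) (s : ℝ) :
    HasGradientAt (fun z => s * J z + G z) (s • gradient J x + gradient G x) x := by
  rw [hasGradientAt_iff_hasFDerivAt, map_add, map_smul, toDual_gradient, toDual_gradient]
  exact (hJ.hasFDerivAt.const_mul s).add hG.hasFDerivAt

theorem ContDiff.differentiable_gradient {f : E → ℝ} (hf : ContDiff ℝ 2 f) :
    Differentiable ℝ (gradient f) :=
  (toDual ℝ E).symm.toContinuousLinearEquiv.differentiable.comp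
    ((hf.fderiv_right (by norm_num)).differentiable one_ne_zero)

theorem StrongConvexOn.stronglyMonotoneWith_gradient {f : E → ℝ} {m : ℝ}
    (hf : StrongConvexOn univ m f) (hd : Differentiable ℝ f) :
    StronglyMonotoneWith m (gradient f) := by
  intro a b
  have hderiv (x : E) : HasFDerivAt (fun z => f z - m / 2 * ‖z‖ ^ 2)
      (fderiv ℝ f x - (m / 2) • (2 • innerSL ℝ x)) x :=
    (hd x).hasFDerivAt.sub ((hasFDerivAt_id x).norm_sq.const_mul _)
  have key := (strongConvexOn_iff_convex.mp hf).fderiv_apply_sub_le_fderiv_apply_sub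
    (fun x => (hderiv x).differentiableAt) a b
  rw [(hderiv a).fderiv, (hderiv b).fderiv] at key
  have hsq : ⟪a, a - b⟫_ℝ - ⟪b, a - b⟫_ℝ = ‖a - b‖ ^ 2 := by
    rw [← inner_sub_left, real_inner_self_eq_norm_sq]
  simp only [sub_apply, smul_apply, innerSL_apply_apply, nsmul_eq_mul, smul_eq_mul] at key
  rw [inner_sub_left, inner_gradient_left, inner_gradient_left, ← hsq]
  linarith

end InnerProductSpace

/-- differentiability of the Tikhonov-type perturbation path.
`G` is twice continuously differentiable and `μ`-strongly convex, `J` is twice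
continuously differentiable and convex, and for `s ≥ 0`, `y(s)` is the unique
minimizer of `sJ + G`.  Then `s ↦ y(s)` is differentiable (within `[0,∞)`) with
`dy(s)/ds = −(∇²G(y(s)) + s∇²J(y(s)))⁻¹ ∇J(y(s))`, i.e. its derivative `d`
satisfies `(∇²G(y(s)) + s∇²J(y(s))) d = −∇J(y(s))`; in particular at `s = 0`
the derivative `d` satisfies `∇²G(y(0)) d = −∇J(y(0))`. -/
theorem perturbation_path_derivative (m : ℕ) (μ : ℝ) (hμ : 0 < μ)
    (G J : EuclideanSpace ℝ (Fin m) → ℝ)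
    (hG : ContDiff ℝ 2 G) (hJ : ContDiff ℝ 2 J)
    (hGsc : StrongConvexOn Set.univ μ G)
    (hJconv : ConvexOn ℝ Set.univ J)
    (y : ℝ → EuclideanSpace ℝ (Fin m))
    (hy : ∀ s : ℝ, 0 ≤ s → ∀ z, s * J (y s) + G (y s) ≤ s * J z + G z) :
    ∀ s : ℝ, 0 ≤ s → ∃ d : EuclideanSpace ℝ (Fin m),
      HasDerivWithinAt y d (Set.Ici (0 : ℝ)) s ∧
      (fderiv ℝ (fun w => gradient G w) (y s)
          + s • fderiv ℝ (fun w => gradient J w) (y s)) d = -gradient J (y s) := by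
  intro s₀ hs₀
  have hdJ := hJ.differentiable two_ne_zero
  have hdG := hG.differentiable two_ne_zero
  have hgrad (s : ℝ) (x) : HasGradientAt (fun z => s * J z + G z)
      (s • gradient J x + gradient G x) x :=
    hasGradientAt_const_mul_add (hdJ x) (hdG x) s
  have hmono (s : ℝ) (hs : s ∈ Ici 0) :
      StronglyMonotoneWith μ fun x => s • gradient J x + gradient G x := by
    rw [← gradient_eq (hgrad s)]
    exact (hGsc.const_mul_add hJconv hs).stronglyMonotoneWith_gradient
      ((hdJ.const_mul s).add hdG)
  have hfoc (s : ℝ) (hs : s ∈ Ici 0) : s • gradient J (y s) + gradient G (y s) = 0 := by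
    have hmin : IsLocalMin (fun z => s * J z + G z) (y s) := Eventually.of_forall (hy s hs)
    exact (toDual ℝ _).map_eq_zero_iff.mp (hmin.hasFDerivAt_eq_zero (hgrad s (y s)))
  exact exists_hasDerivWithinAt_of_smul_add_eq_zero hμ hs₀ hmono hfoc
    (hJ.differentiable_gradient _).hasFDerivAt (hG.differentiable_gradient _).hasFDerivAt
end
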